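/- arXiv:0801.4336 — 4 statements merged into one kernel-verified Lean document; each statement's English description precedes it below -/
import Mathlib

section
/- Let n ≥ 1 and let ω > 0 be a flatness constant for dimension n, i.e., every convex body K ⊆ ℝⁿ (bounded closed convex set of nonzero volume) with lattice width w(K) ≥ ω contains a point of ℤⁿ. Then every nonempty rational polyhedron P ⊆ ℝⁿ whose lattice width is infinite or satisfies w(P) ≥ ω contains a point of ℤⁿ. -/
open Matrix Set MeasureTheory

noncomputable def widthAlong {n : ℕ} (K : Set (Fin n → ℝ)) (c : Fin n → ℝ) : EReal :=
  sSup ((fun x => ((∑ i, c i * x i : ℝ) : EReal)) '' K) -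
    sInf ((fun x => ((∑ i, c i * x i : ℝ) : EReal)) '' K)

noncomputable def latticeWidth {n : ℕ} (K : Set (Fin n → ℝ)) : EReal :=
  sInf {w : EReal | ∃ c : Fin n → ℤ, c ≠ 0 ∧ w = widthAlong K (fun i => (c i : ℝ))}

def IsFlatnessConstant (n : ℕ) (ω : ℝ) : Prop :=
  0 < ω ∧ ∀ K : Set (Fin n → ℝ),
    Bornology.IsBounded K → IsClosed K → Convex ℝ K → volume K ≠ 0 →
    (ω : EReal) ≤ latticeWidth K → ∃ z : Fin n → ℤ, (fun i => (z i : ℝ)) ∈ K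

def IsRatPolyhedron {n : ℕ} (P : Set (Fin n → ℝ)) : Prop :=
  ∃ (m : ℕ) (A : Matrix (Fin m) (Fin n) ℚ) (b : Fin m → ℚ),
    P = {x | ∀ i, (∑ j, (A i j : ℝ) * x j) ≤ (b i : ℝ)}

/-!
If some nonzero row of the rational system defining `P` is tight on all of `P`, clearing its
denominators gives a nonzero integer direction along which `P` has width `0 < ω`. Otherwise `P`
has an interior point, hence contains a ball `B` of some radius `r`. Along integer directions with
a coordinate larger than `ω / 2r` the ball alone has width at least `ω`; each of the finitely many
remaining directions `c` has `w_c(P) ≥ ω`, and since a linear functional bounded on a polyhedron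
attains its bounds (the image of a polyhedron under a linear functional is closed, by
Fourier–Motzkin elimination), two points of `P` realise this. Intersecting `P` with a large ball
containing `B` and all these points gives a convex body of lattice width at least `ω` inside `P`.
-/

theorem Set.Finite.exists_mem_upperBounds_inter_lowerBounds {α : Type*}
    [ConditionallyCompleteLattice α] {s t : Set α} (hs : s.Finite) (ht : t.Finite)
    (hst : ∀ x ∈ s, ∀ y ∈ t, x ≤ y) : (upperBounds s ∩ lowerBounds t).Nonempty := by
  rcases s.eq_empty_or_nonempty with rfl | hsne
  · have : Nonempty α := ⟨sInf t⟩
    exact ⟨sInf t, by simp, fun y hy => csInf_le ht.bddBelow hy⟩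
  · exact ⟨sSup s, fun x hx => le_csSup hs.bddAbove hx,
      fun y hy => csSup_le hsne fun x hx => hst x hx y hy⟩

section Polyhedron

variable {ι κ : Type} [Fintype ι]

def polyhedron (a : κ → ι → ℝ) (b : κ → ℝ) : Set (ι → ℝ) :=
  {x | ∀ i, a i ⬝ᵥ x ≤ b i}

def IsPolyhedron (S : Set (ι → ℝ)) : Prop :=
  ∃ (κ : Type) (_ : Fintype κ) (a : κ → ι → ℝ) (b : κ → ℝ), S = polyhedron a b

theorem isClosed_polyhedron (a : κ → ι → ℝ) (b : κ → ℝ) : IsClosed (polyhedron a b) := by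
  rw [polyhedron, ofPred_forall]
  exact isClosed_iInter fun i =>
    isClosed_le (continuous_const.dotProduct continuous_id) continuous_const

theorem convex_polyhedron (a : κ → ι → ℝ) (b : κ → ℝ) : Convex ℝ (polyhedron a b) := by
  rw [polyhedron, ofPred_forall]
  exact convex_iInter fun i =>
    convex_halfSpace_le ⟨dotProduct_add (a i), fun c x => dotProduct_smul c (a i) x⟩ (b i)

theorem polyhedron_exists_forall_lt {a : κ → ι → ℝ} {b : κ → ℝ} (hne : (polyhedron a b).Nonempty)
    (s : Finset κ) (h : ∀ i ∈ s, ∃ x ∈ polyhedron a b, a i ⬝ᵥ x < b i) :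
    ∃ x ∈ polyhedron a b, ∀ i ∈ s, a i ⬝ᵥ x < b i := by
  classical
  obtain ⟨x₀, hx₀⟩ := hne
  induction s using Finset.induction_on with
  | empty => exact ⟨x₀, hx₀, by simp⟩
  | insert i s _ ih =>
    obtain ⟨x, hx, hxs⟩ := ih fun j hj => h j (Finset.mem_insert_of_mem hj)
    obtain ⟨y, hy, hyi⟩ := h i (Finset.mem_insert_self i s)
    refine ⟨(1 / 2 : ℝ) • x + (1 / 2 : ℝ) • y,
      convex_polyhedron a b hx hy (by norm_num) (by norm_num) (by norm_num), fun j hj => ?_⟩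
    rw [dotProduct_add, dotProduct_smul, dotProduct_smul, smul_eq_mul, smul_eq_mul]
    rcases Finset.mem_insert.1 hj with rfl | hj
    · linarith [hx j]
    · linarith [hxs j hj, hy j]

theorem interior_polyhedron_nonempty_or_exists_forall_eq [Fintype κ] {a : κ → ι → ℝ}
    {b : κ → ℝ} (hne : (polyhedron a b).Nonempty) :
    (interior (polyhedron a b)).Nonempty ∨ ∃ i, a i ≠ 0 ∧ ∀ x ∈ polyhedron a b, a i ⬝ᵥ x = b i := by
  classical
  refine or_iff_not_imp_right.2 fun h => ?_
  simp only [not_exists, not_and, not_forall] at h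
  set s := Finset.univ.filter (a · ≠ 0)
  obtain ⟨x, hx, hxs⟩ := polyhedron_exists_forall_lt hne s fun i hi => by
    obtain ⟨y, hy, hyi⟩ := h i (Finset.mem_filter.1 hi).2
    exact ⟨y, hy, (hy i).lt_of_ne hyi⟩
  have hopen : IsOpen {y | ∀ i ∈ s, a i ⬝ᵥ y < b i} := by
    simp only [ofPred_forall]
    exact isOpen_biInter_finset fun i _ =>
      isOpen_lt (continuous_const.dotProduct continuous_id) continuous_const
  refine ⟨x, interior_maximal (fun y hy i => ?_) hopen hxs⟩
  by_cases hi : a i = 0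
  · simpa [hi] using hx i
  · exact (hy i (by simpa [s] using hi)).le

theorem dotProduct_eq_mul_add_dotProduct_ne [DecidableEq ι] (l : ι) (v x : ι → ℝ) :
    v ⬝ᵥ x = v l * x l + (fun j : {j // j ≠ l} => v j) ⬝ᵥ (fun j => x j) :=
  Fintype.sum_eq_add_sum_subtype_ne _ l

/-- Fourier–Motzkin elimination of the coordinate `l`. -/
theorem IsPolyhedron.image_restrict [DecidableEq ι] {S : Set (ι → ℝ)} (hS : IsPolyhedron S)
    (l : ι) : IsPolyhedron ((fun x (j : {j // j ≠ l}) => x j) '' S) := by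
  classical
  obtain ⟨κ, _, a, b, rfl⟩ := hS
  let r : κ → {j // j ≠ l} → ℝ := fun i j => a i j
  refine ⟨{i // a i l = 0} ⊕ {i // 0 < a i l} × {i // a i l < 0}, inferInstance,
    Sum.elim (fun i => r i) (fun p => a p.1 l • r p.2 - a p.2 l • r p.1),
    Sum.elim (fun i => b i) (fun p => a p.1 l * b p.2 - a p.2 l * b p.1), ?_⟩
  ext y
  simp only [polyhedron, mem_image, mem_ofPred_eq, Sum.forall, Sum.elim_inl, Sum.elim_inr,
    Prod.forall, Subtype.forall, sub_dotProduct, smul_dotProduct, smul_eq_mul]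
  constructor
  · rintro ⟨x, hx, rfl⟩
    have split := fun i => dotProduct_eq_mul_add_dotProduct_ne l (a i) x
    refine ⟨fun i hi => ?_, fun i hi i' hi' => ?_⟩
    · simpa [split, hi] using hx i
    · have h := hx i
      have h' := hx i'
      rw [split] at h h'
      nlinarith
  · rintro ⟨hzero, hpair⟩
    -- `x l = t` is feasible iff `a i l * t ≤ d i` for all rows `i`
    set d : κ → ℝ := fun i => b i - r i ⬝ᵥ y
    obtain ⟨t, hlow, hupp⟩ := Set.Finite.exists_mem_upperBounds_inter_lowerBounds
      ((Set.toFinite {i | a i l < 0}).image fun i => d i / a i l)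
      ((Set.toFinite {i | 0 < a i l}).image fun i => d i / a i l) (by
        rintro _ ⟨i', hi', rfl⟩ _ ⟨i, hi, rfl⟩
        have := hpair i hi i' hi'
        rw [div_le_iff_of_neg hi', div_mul_eq_mul_div, div_le_iff₀ hi]
        linarith)
    set x := (Equiv.funSplitAt l ℝ).symm (t, y)
    have hx : (x l, fun j : {j // j ≠ l} => x j) = (t, y) :=
      (Equiv.funSplitAt l ℝ).apply_symm_apply (t, y)
    rw [Prod.mk.injEq] at hx
    refine ⟨x, fun i => ?_, hx.2⟩
    rw [dotProduct_eq_mul_add_dotProduct_ne l, hx.1, hx.2]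
    rcases lt_trichotomy (a i l) 0 with hi | hi | hi
    · have := hlow ⟨i, hi, rfl⟩
      rw [div_le_iff_of_neg hi] at this
      linarith
    · rw [hi, zero_mul, zero_add]
      exact hzero i hi
    · have := hupp ⟨i, hi, rfl⟩
      rw [le_div_iff₀ hi] at this
      linarith

theorem IsPolyhedron.isClosed {S : Set (ι → ℝ)} (hS : IsPolyhedron S) : IsClosed S := by
  obtain ⟨κ, _, a, b, rfl⟩ := hS
  exact isClosed_polyhedron a b

theorem IsPolyhedron.isClosed_image_eval {S : Set (ι → ℝ)} (hS : IsPolyhedron S) (k : ι) :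
    IsClosed ((fun x => x k) '' S) := by
  classical
  induction h : Fintype.card ι generalizing ι with
  | zero => exact (Fintype.card_eq_zero_iff.1 h).elim k
  | succ N ih =>
    by_cases hk : ∀ l, l = k
    · have : (fun x => x k) '' S = (fun t _ => t) ⁻¹' S := by
        ext t
        refine ⟨?_, fun ht => ⟨_, ht, rfl⟩⟩
        rintro ⟨x, hx, rfl⟩
        show (fun _ => x k) ∈ S
        convert hx using 1
        ext l
        rw [hk l]
      rw [this]
      exact hS.isClosed.preimage (continuous_pi fun _ => continuous_id)
    · obtain ⟨l, hl⟩ := not_forall.1 hk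
      have := ih (hS.image_restrict l) ⟨k, Ne.symm hl⟩ (by simp [Fintype.card_subtype_compl, h])
      rwa [image_image] at this

theorem optionElim_dotProduct (β : ℝ) (v : ι → ℝ) (y : Option ι → ℝ) :
    (fun o => o.elim β v) ⬝ᵥ y = β * y none + v ⬝ᵥ (fun i => y (some i)) :=
  Fintype.sum_option _

theorem IsPolyhedron.isClosed_image_dotProduct {S : Set (ι → ℝ)} (hS : IsPolyhedron S)
    (c : ι → ℝ) : IsClosed ((c ⬝ᵥ ·) '' S) := by
  obtain ⟨κ, _, a, b, rfl⟩ := hS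
  -- the graph `{(c ⬝ᵥ x, x) | x ∈ S}` as a polyhedron in `Option ι → ℝ`
  let a' : κ ⊕ Bool → Option ι → ℝ := Sum.elim (fun i o => o.elim 0 (a i))
    (fun s => (if s then 1 else -1 : ℝ) • fun o => o.elim (-1) c)
  have hgraph : (c ⬝ᵥ ·) '' polyhedron a b = (fun y => y none) '' polyhedron a' (Sum.elim b 0) := by
    ext t
    simp only [polyhedron, mem_image, mem_ofPred_eq, Sum.forall, Sum.elim_inl, Sum.elim_inr,
      Bool.forall_bool, a', smul_dotProduct, optionElim_dotProduct, smul_eq_mul, Pi.zero_apply,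
      Bool.false_eq_true, ↓reduceIte]
    constructor
    · rintro ⟨x, hx, rfl⟩
      exact ⟨fun o => o.elim (c ⬝ᵥ x) x, ⟨by simpa using hx, by simp⟩, rfl⟩
    · rintro ⟨y, ⟨hy, hf, ht⟩, rfl⟩
      exact ⟨_, by simpa using hy, by linarith⟩
  rw [hgraph]
  exact IsPolyhedron.isClosed_image_eval ⟨_, inferInstance, _, _, rfl⟩ none

end Polyhedron

section Width

variable {n : ℕ} {K : Set (Fin n → ℝ)}

theorem sub_le_widthAlong (c : Fin n → ℝ) {u v : Fin n → ℝ} (hu : u ∈ K) (hv : v ∈ K) :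
    ((c ⬝ᵥ u - c ⬝ᵥ v : ℝ) : EReal) ≤ widthAlong K c := by
  rw [EReal.coe_sub]
  exact EReal.sub_le_sub (le_sSup ⟨u, hu, rfl⟩) (sInf_le ⟨v, hv, rfl⟩)

theorem widthAlong_eq_zero_of_forall_dotProduct_eq {c : Fin n → ℝ} {β : ℝ} (hK : K.Nonempty)
    (h : ∀ x ∈ K, c ⬝ᵥ x = β) : widthAlong K c = 0 := by
  have : (fun x => ((∑ i, c i * x i : ℝ) : EReal)) '' K = {(β : EReal)} := by
    rw [← hK.image_const]
    exact image_congr fun x hx => congrArg _ (h x hx)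
  rw [widthAlong, this, sSup_singleton, sInf_singleton, ← EReal.coe_sub, sub_self, EReal.coe_zero]

theorem exists_le_sub_of_le_widthAlong {c : Fin n → ℝ} {ω : ℝ} (hK : K.Nonempty)
    (hc : IsClosed ((c ⬝ᵥ ·) '' K)) (h : (ω : EReal) ≤ widthAlong K c) :
    ∃ u ∈ K, ∃ v ∈ K, ω ≤ c ⬝ᵥ u - c ⬝ᵥ v := by
  by_contra! hlt
  obtain ⟨x₀, hx₀⟩ := hK
  have hT : ((c ⬝ᵥ ·) '' K).Nonempty := ⟨_, x₀, hx₀, rfl⟩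
  have hup : BddAbove ((c ⬝ᵥ ·) '' K) :=
    ⟨c ⬝ᵥ x₀ + ω, by rintro _ ⟨u, hu, rfl⟩; linarith [hlt u hu x₀ hx₀]⟩
  have hlow : BddBelow ((c ⬝ᵥ ·) '' K) :=
    ⟨c ⬝ᵥ x₀ - ω, by rintro _ ⟨v, hv, rfl⟩; linarith [hlt x₀ hx₀ v hv]⟩
  obtain ⟨u, hu, hu_eq⟩ := hc.csSup_mem hT hup
  obtain ⟨v, hv, hv_eq⟩ := hc.csInf_mem hT hlow
  have : widthAlong K c ≤ ((c ⬝ᵥ u - c ⬝ᵥ v : ℝ) : EReal) := by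
    rw [EReal.coe_sub]
    refine EReal.sub_le_sub (sSup_le ?_) (le_sInf ?_) <;> rintro _ ⟨x, hx, rfl⟩ <;>
      refine EReal.coe_le_coe_iff.2 ?_
    · exact (le_csSup hup ⟨x, hx, rfl⟩).trans_eq hu_eq.symm
    · exact hv_eq.trans_le (csInf_le hlow ⟨x, hx, rfl⟩)
  exact (hlt u hu v hv).not_ge (EReal.coe_le_coe_iff.1 (h.trans this))

theorem le_widthAlong_of_closedBall_subset {x : Fin n → ℝ} {r ω : ℝ} (hr : 0 < r)
    (hK : Metric.closedBall x r ⊆ K) (c : Fin n → ℝ) (j : Fin n) (hj : ω / (2 * r) ≤ |c j|) :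
    (ω : EReal) ≤ widthAlong K c := by
  have hmem : ∀ s : ℝ, |s| = r → x + Pi.single j s ∈ K := fun s hs =>
    hK (by simp [dist_eq_norm, Pi.norm_single, hs])
  have hsub : ∀ s, c ⬝ᵥ (x + Pi.single j s) - c ⬝ᵥ (x + Pi.single j (-s)) = 2 * s * c j := by
    intro s
    simp only [dotProduct_add, dotProduct_single]
    ring
  obtain ⟨s, hs, hsc⟩ : ∃ s, |s| = r ∧ s * c j = r * |c j| := by
    rcases abs_cases (c j) with ⟨hcj, -⟩ | ⟨hcj, -⟩
    · exact ⟨r, abs_of_pos hr, by rw [hcj]⟩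
    · exact ⟨-r, by simp [hr.le], by rw [hcj]; ring⟩
  refine (EReal.coe_le_coe_iff.2 ?_).trans
    (sub_le_widthAlong c (hmem s hs) (hmem (-s) (by rwa [abs_neg])))
  rw [div_le_iff₀' (by positivity)] at hj
  linarith [hsub s]

theorem latticeWidth_le_widthAlong {c : Fin n → ℤ} (hc : c ≠ 0) :
    latticeWidth K ≤ widthAlong K (fun i => (c i : ℝ)) :=
  sInf_le ⟨c, hc, rfl⟩

theorem le_latticeWidth {w : EReal}
    (h : ∀ c : Fin n → ℤ, c ≠ 0 → w ≤ widthAlong K (fun i => (c i : ℝ))) : w ≤ latticeWidth K :=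
  le_sInf fun _ ⟨c, hc, hw⟩ => hw ▸ h c hc

theorem latticeWidth_nonpos_of_forall_dotProduct_eq {r : Fin n → ℚ} (hr : r ≠ 0)
    (hK : K.Nonempty) {β : ℝ} (h : ∀ x ∈ K, (fun j => (r j : ℝ)) ⬝ᵥ x = β) :
    latticeWidth K ≤ 0 := by
  obtain ⟨N, hN⟩ := IsLocalization.exist_integer_multiples_of_finite (nonZeroDivisors ℤ) r
  choose z hz using hN
  have hzr : (fun j => (z j : ℝ)) = ((N : ℤ) : ℝ) • fun j => (r j : ℝ) := by
    ext j
    simpa using congrArg (Rat.cast : ℚ → ℝ) (hz j)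
  have hz0 : z ≠ 0 := by
    rintro rfl
    exact hr (funext fun j => by simpa [nonZeroDivisors.coe_ne_zero N] using (hz j).symm)
  calc latticeWidth K ≤ widthAlong K (fun j => (z j : ℝ)) := latticeWidth_le_widthAlong hz0
    _ = 0 := widthAlong_eq_zero_of_forall_dotProduct_eq hK fun x hx => by
      rw [hzr, smul_dotProduct, h x hx]

theorem exists_convexBody_subset_le_latticeWidth {P : Set (Fin n → ℝ)} {ω : ℝ} (hPc : IsClosed P)
    (hPcv : Convex ℝ P) (hint : (interior P).Nonempty) (hdir : ∀ c, IsClosed ((c ⬝ᵥ ·) '' P))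
    (hω : (ω : EReal) ≤ latticeWidth P) :
    ∃ K ⊆ P, Bornology.IsBounded K ∧ IsClosed K ∧ Convex ℝ K ∧ volume K ≠ 0 ∧
      (ω : EReal) ≤ latticeWidth K := by
  obtain ⟨x, hx⟩ := hint
  obtain ⟨r, hr, hball⟩ := Metric.nhds_basis_closedBall.mem_iff.1 (mem_interior_iff_mem_nhds.1 hx)
  set D : Set (Fin n → ℤ) := Icc (fun _ => -⌈ω / (2 * r)⌉) (fun _ => ⌈ω / (2 * r)⌉)
  have hpair : ∀ c ∈ D, c ≠ 0 → ∃ u ∈ P, ∃ v ∈ P,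
      ω ≤ (fun i => (c i : ℝ)) ⬝ᵥ u - (fun i => (c i : ℝ)) ⬝ᵥ v := fun c _ hc =>
    exists_le_sub_of_le_widthAlong ⟨x, hball (Metric.mem_closedBall_self hr.le)⟩ (hdir _)
      (hω.trans (latticeWidth_le_widthAlong hc))
  choose! u hu v hv huv using hpair
  obtain ⟨R, hR⟩ := (Metric.isBounded_closedBall.union
    ((D.toFinite.image u).isBounded.union (D.toFinite.image v).isBounded)).subset_closedBall x
  have hsmall : Metric.closedBall x r ⊆ P ∩ Metric.closedBall x R := fun y hy =>
    ⟨hball hy, hR (Or.inl hy)⟩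
  refine ⟨P ∩ Metric.closedBall x R, inter_subset_left,
    Metric.isBounded_closedBall.subset inter_subset_right, hPc.inter Metric.isClosed_closedBall,
    hPcv.inter (convex_closedBall x R), fun h0 => ?_, le_latticeWidth fun c hc => ?_⟩
  · exact Metric.isOpen_ball.measure_ne_zero volume (Metric.nonempty_ball.2 hr)
      (measure_mono_null (Metric.ball_subset_closedBall.trans hsmall) h0)
  by_cases hcD : c ∈ D
  · exact (EReal.coe_le_coe_iff.2 (huv c hcD hc)).trans (sub_le_widthAlong _
      ⟨hu c hcD hc, hR (Or.inr (Or.inl ⟨c, hcD, rfl⟩))⟩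
      ⟨hv c hcD hc, hR (Or.inr (Or.inr ⟨c, hcD, rfl⟩))⟩)
  · obtain ⟨j, hj⟩ : ∃ j, ¬|c j| ≤ ⌈ω / (2 * r)⌉ := not_forall.1 fun h =>
      hcD ⟨fun j => (abs_le.1 (h j)).1, fun j => (abs_le.1 (h j)).2⟩
    exact le_widthAlong_of_closedBall_subset hr hsmall _ j
      ((Int.le_ceil _).trans (by exact_mod_cast (not_le.1 hj).le))

end Width

theorem rational_polyhedron_flatness_general {n : ℕ} (ω : ℝ)
    (hω : IsFlatnessConstant n ω)
    (P : Set (Fin n → ℝ)) (hP : IsRatPolyhedron P) (hne : P.Nonempty)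
    (hw : latticeWidth P = ⊤ ∨ (ω : EReal) ≤ latticeWidth P) :
    ∃ z : Fin n → ℤ, (fun i => (z i : ℝ)) ∈ P := by
  obtain ⟨hωpos, hflat⟩ := hω
  have hωP : (ω : EReal) ≤ latticeWidth P := hw.elim (fun h => h ▸ le_top) id
  obtain ⟨m, A, b, rfl⟩ := hP
  have hpoly : IsPolyhedron (polyhedron (fun i j => (A i j : ℝ)) fun i => (b i : ℝ)) :=
    ⟨_, inferInstance, _, _, rfl⟩
  rcases interior_polyhedron_nonempty_or_exists_forall_eq hne with hint | ⟨i, hi, heq⟩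
  · obtain ⟨K, hKP, hKb, hKc, hKcv, hKvol, hKω⟩ := exists_convexBody_subset_le_latticeWidth
      hpoly.isClosed (convex_polyhedron _ _) hint hpoly.isClosed_image_dotProduct hωP
    obtain ⟨z, hz⟩ := hflat K hKb hKc hKcv hKvol hKω
    exact ⟨z, hKP hz⟩
  · have hA : A i ≠ 0 := fun h => hi (funext fun j => by simp [h])
    have := hωP.trans (latticeWidth_nonpos_of_forall_dotProduct_eq hA hne heq)
    exact absurd (EReal.coe_nonpos.1 this) hωpos.not_ge

/-- If `ω` is a flatness constant for dimension `n ≥ 1`, then every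
nonempty rational polyhedron whose lattice width is infinite or at least `ω`
contains an integral point. -/
theorem rational_polyhedron_flatness {n : ℕ} (hn : 1 ≤ n) (ω : ℝ)
    (hω : IsFlatnessConstant n ω)
    (P : Set (Fin n → ℝ)) (hP : IsRatPolyhedron P) (hne : P.Nonempty)
    (hw : latticeWidth P = ⊤ ∨ (ω : EReal) ≤ latticeWidth P) :
    ∃ z : Fin n → ℤ, (fun i => (z i : ℝ)) ∈ P :=
  rational_polyhedron_flatness_general ω hω P hP hne hw
end

section
/- Let ω > 0 be a flatness constant for dimension n. Let P ⊆ ℝⁿ be a nonempty rational polyhedron of finite lattice width with w(P) ≥ ω, let c ∈ ℤⁿ be a width direction of P, and let β := min{c·x : x ∈ P}. Then there exists an integral point z ∈ P ∩ ℤⁿ with β ≤ c·z ≤ β + ω. -/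
open Matrix Set MeasureTheory

def IsPolyR {n : ℕ} (S : Set (Fin n → ℝ)) : Prop :=
  ∃ (m : ℕ) (A : Fin m → Fin n → ℝ) (b : Fin m → ℝ),
    S = {x | ∀ i, (∑ j, A i j * x j) ≤ b i}

lemma isPolyR_fintype {n : ℕ} {ι : Type} [Fintype ι] (C : ι → Fin n → ℝ) (β : ι → ℝ) :
    IsPolyR {x | ∀ i, (∑ j, C i j * x j) ≤ β i} := by
  obtain e := Fintype.equivFin ι
  refine ⟨Fintype.card ι, fun k => C (e.symm k), fun k => β (e.symm k), ?_⟩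
  ext x
  constructor
  · intro h k
    exact h (e.symm k)
  · intro h i
    have := h (e i)
    simpa using this

lemma fm_step {n : ℕ} (S : Set (Fin (n+1) → ℝ)) (h : IsPolyR S) :
    IsPolyR {y : Fin n → ℝ | ∃ t, Fin.cons t y ∈ S} := by
  obtain ⟨m, A, b, rfl⟩ := h
  set a : Fin m → ℝ := fun i => A i 0 with ha
  set c : Fin m → Fin n → ℝ := fun i j => A i j.succ with hc
  have key : ∀ (t : ℝ) (y : Fin n → ℝ) (i : Fin m),
      (∑ j, A i j * (Fin.cons t y : Fin (n+1) → ℝ) j) = a i * t + ∑ j, c i j * y j := by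
    intro t y i
    rw [Fin.sum_univ_succ]
    simp [ha, hc]
  -- new system
  classical
  set C : (Fin m ⊕ Fin m × Fin m) → Fin n → ℝ := fun ι =>
    match ι with
    | Sum.inl i => if a i = 0 then c i else 0
    | Sum.inr (i, k) => if 0 < a i ∧ a k < 0 then (fun j => a i * c k j - a k * c i j) else 0
    with hC
  set β : (Fin m ⊕ Fin m × Fin m) → ℝ := fun ι =>
    match ι with
    | Sum.inl i => if a i = 0 then b i else 0
    | Sum.inr (i, k) => if 0 < a i ∧ a k < 0 then a i * b k - a k * b i else 0
    with hβ
  have : {y : Fin n → ℝ | ∃ t, Fin.cons t y ∈ {x | ∀ i, (∑ j, A i j * x j) ≤ b i}}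
      = {y | ∀ i, (∑ j, C i j * y j) ≤ β i} := by
    ext y
    simp only [mem_setOf_eq]
    constructor
    · rintro ⟨t, ht⟩ ι
      match ι with
      | Sum.inl i =>
        by_cases h0 : a i = 0
        · have := ht i
          rw [key] at this
          simp only [hC, hβ, h0, if_pos]
          rw [h0] at this
          simpa using this
        · simp [hC, hβ, h0]
      | Sum.inr (i, k) =>
        by_cases hik : 0 < a i ∧ a k < 0
        · have hi := ht i
          have hk := ht k
          rw [key] at hi hk
          simp only [hC, hβ, if_pos hik]
          have e1 : ∑ j, (a i * c k j - a k * c i j) * y j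
              = a i * (∑ j, c k j * y j) - a k * (∑ j, c i j * y j) := by
            rw [Finset.mul_sum, Finset.mul_sum, ← Finset.sum_sub_distrib]
            congr 1; ext j; ring
          rw [e1]
          nlinarith [hik.1, hik.2, hi, hk]
        · simp [hC, hβ, hik]
    · intro hy
      -- build t
      set g : Fin m → ℝ := fun i => b i - ∑ j, c i j * y j with hg
      have hrow : ∀ (t : ℝ) (i : Fin m), a i * t ≤ g i → (∑ j, A i j * (Fin.cons t y : Fin (n+1) → ℝ) j) ≤ b i := by
        intro t i hi
        rw [key]
        simp only [hg] at hi
        linarith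
      have hzero : ∀ i, a i = 0 → 0 ≤ g i := by
        intro i h0
        have := hy (Sum.inl i)
        simp only [hC, hβ, h0, if_pos] at this
        simp only [hg]
        linarith
      have hpair : ∀ i k, 0 < a i → a k < 0 → a k * g i ≤ a i * g k := by
        intro i k hi hk
        have := hy (Sum.inr (i, k))
        simp only [hC, hβ, hi, hk, and_true, if_pos, true_and] at this
        have e1 : ∑ j, (a i * c k j - a k * c i j) * y j
            = a i * (∑ j, c k j * y j) - a k * (∑ j, c i j * y j) := by
          rw [Finset.mul_sum, Finset.mul_sum, ← Finset.sum_sub_distrib]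
          congr 1; ext j; ring
        rw [e1] at this
        simp only [hg]
        nlinarith
      set Neg : Finset (Fin m) := Finset.univ.filter (fun k => a k < 0) with hNeg
      set Pos : Finset (Fin m) := Finset.univ.filter (fun i => 0 < a i) with hPos
      rcases Finset.eq_empty_or_nonempty Neg with hN | hN
      · rcases Finset.eq_empty_or_nonempty Pos with hP | hP
        · refine ⟨0, fun i => hrow 0 i ?_⟩
          have h0 : a i = 0 := by
            by_contra h0
            rcases lt_or_gt_of_ne h0 with hlt | hgt
            · have hm : i ∈ Neg := by simp [hNeg, hlt]
              rw [hN] at hm; simp at hm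
            · have hm : i ∈ Pos := by simp [hPos, hgt]
              rw [hP] at hm; simp at hm
          rw [h0]
          simpa using hzero i h0
        · refine ⟨Pos.inf' hP (fun i => g i / a i), fun i => hrow _ i ?_⟩
          rcases lt_trichotomy (a i) 0 with hlt | heq | hgt
          · exfalso
            have hm : i ∈ Neg := by simp [hNeg, hlt]
            rw [hN] at hm; simp at hm
          · rw [heq]; simpa using hzero i heq
          · have hmem : i ∈ Pos := by simp [hPos, hgt]
            have h1 : Pos.inf' hP (fun i => g i / a i) ≤ g i / a i :=
              Finset.inf'_le _ hmem
            calc a i * Pos.inf' hP (fun i => g i / a i) ≤ a i * (g i / a i) := by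
                  exact mul_le_mul_of_nonneg_left h1 (le_of_lt hgt)
              _ = g i := by field_simp
      · refine ⟨Neg.sup' hN (fun k => g k / a k), fun i => hrow _ i ?_⟩
        set t := Neg.sup' hN (fun k => g k / a k) with htdef
        obtain ⟨k0, hk0mem, hk0⟩ := Finset.exists_mem_eq_sup' hN (fun k => g k / a k)
        have hk0neg : a k0 < 0 := (Finset.mem_filter.mp hk0mem).2
        rcases lt_trichotomy (a i) 0 with hlt | heq | hgt
        · have hmem : i ∈ Neg := by simp [hNeg, hlt]
          have h1 : g i / a i ≤ t := by
            rw [htdef]; exact Finset.le_sup' (fun k => g k / a k) hmem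
          calc a i * t ≤ a i * (g i / a i) := by
                exact mul_le_mul_of_nonpos_left h1 (le_of_lt hlt)
            _ = g i := by
                rw [mul_comm, div_mul_cancel₀ _ (ne_of_lt hlt)]
        · rw [heq]; simpa using hzero i heq
        · have hp := hpair i k0 hgt hk0neg
          have h2 : a i * g k0 / a k0 ≤ g i := by
            rw [div_le_iff_of_neg hk0neg]
            nlinarith
          have ht2 : t = g k0 / a k0 := hk0
          rw [ht2, ← mul_div_assoc]
          exact h2
  rw [this]
  exact isPolyR_fintype C β

lemma poly_max_last {n : ℕ} : ∀ (S : Set (Fin (n+1) → ℝ)), IsPolyR S → S.Nonempty →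
    BddAbove ((fun z => z (Fin.last n)) '' S) →
    ∃ z ∈ S, ∀ w ∈ S, w (Fin.last n) ≤ z (Fin.last n) := by
  induction n with
  | zero =>
    rintro S ⟨m, A, b, rfl⟩ hne hbdd
    set T : Set ℝ := (fun z : Fin 1 → ℝ => z (Fin.last 0)) '' {x | ∀ i, (∑ j, A i j * x j) ≤ b i}
      with hT
    have hTeq : T = {t : ℝ | ∀ i, A i 0 * t ≤ b i} := by
      ext t
      constructor
      · rintro ⟨z, hz, rfl⟩ i
        have := hz i
        rw [Fin.sum_univ_one] at this
        convert this using 2 <;> simp [Fin.last]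
      · intro ht
        refine ⟨fun _ => t, fun i => ?_, rfl⟩
        rw [Fin.sum_univ_one]
        exact ht i
    have hTclosed : IsClosed T := by
      rw [hTeq]
      have : {t : ℝ | ∀ i, A i 0 * t ≤ b i} = ⋂ i, {t : ℝ | A i 0 * t ≤ b i} := by
        ext t; simp
      rw [this]
      exact isClosed_iInter fun i =>
        isClosed_le (by continuity) continuous_const
    have hTne : T.Nonempty := hne.image _
    have hmem : sSup T ∈ T := hTclosed.csSup_mem hTne hbdd
    obtain ⟨z, hz, hzlast⟩ := hmem
    refine ⟨z, hz, fun w hw => ?_⟩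
    have hzl : z (Fin.last 0) = sSup T := hzlast
    rw [hzl]
    exact le_csSup hbdd ⟨w, hw, rfl⟩
  | succ n ih =>
    rintro S hpoly hne hbdd
    set S' : Set (Fin (n+1) → ℝ) := {y | ∃ t, Fin.cons t y ∈ S} with hS'
    have hpoly' : IsPolyR S' := fm_step S hpoly
    have htail : ∀ z : Fin (n+2) → ℝ, z ∈ S → (fun i : Fin (n+1) => z i.succ) ∈ S' := by
      intro z hz
      have e : (Fin.cons (z 0) fun i : Fin (n+1) => z i.succ) = z := Fin.cons_self_tail z
      exact ⟨z 0, e.symm ▸ hz⟩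
    obtain ⟨z₀, hz₀⟩ := hne
    have hne' : S'.Nonempty := ⟨_, htail z₀ hz₀⟩
    have hlast : ∀ (t : ℝ) (y : Fin (n+1) → ℝ),
        (Fin.cons t y : Fin (n+2) → ℝ) (Fin.last (n+1)) = y (Fin.last n) := by
      intro t y
      rw [← Fin.succ_last, Fin.cons_succ]
    have himg : (fun y : Fin (n+1) → ℝ => y (Fin.last n)) '' S'
        = (fun z : Fin (n+2) → ℝ => z (Fin.last (n+1))) '' S := by
      ext r
      constructor
      · rintro ⟨y, ⟨t, hty⟩, rfl⟩
        exact ⟨Fin.cons t y, hty, hlast t y⟩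
      · rintro ⟨z, hz, rfl⟩
        refine ⟨fun i => z i.succ, htail z hz, ?_⟩
        show z (Fin.last n).succ = z (Fin.last (n+1))
        rw [Fin.succ_last]
    have hbdd' : BddAbove ((fun y : Fin (n+1) → ℝ => y (Fin.last n)) '' S') := by
      rw [himg]; exact hbdd
    obtain ⟨ystar, ⟨t, hty⟩, hmax⟩ := ih S' hpoly' hne' hbdd'
    refine ⟨Fin.cons t ystar, hty, fun w hw => ?_⟩
    have h1 : (fun i : Fin (n+1) => w i.succ) ∈ S' := htail w hw
    have h2 := hmax _ h1
    rw [hlast]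
    calc w (Fin.last (n+1)) = w (Fin.last n).succ := by rw [Fin.succ_last]
      _ ≤ ystar (Fin.last n) := h2

lemma poly_attains {n : ℕ} (S : Set (Fin n → ℝ)) (h : IsPolyR S) (hne : S.Nonempty)
    (d : Fin n → ℝ) (hbdd : BddAbove ((fun x => ∑ i, d i * x i) '' S)) :
    ∃ x ∈ S, ∀ w ∈ S, ∑ i, d i * w i ≤ ∑ i, d i * x i := by
  classical
  obtain ⟨m, A, b, hSrepr⟩ := h
  set Shat : Set (Fin (n+1) → ℝ) :=
    {z | (fun j => z j.castSucc) ∈ S ∧ z (Fin.last n) = ∑ i, d i * z i.castSucc} with hShat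
  have hpolyhat : IsPolyR Shat := by
    set C : (Fin m ⊕ Bool) → (Fin (n+1) → ℝ) := fun ι =>
      match ι with
      | Sum.inl i => Fin.lastCases 0 (A i)
      | Sum.inr true => Fin.lastCases 1 (fun j => -d j)
      | Sum.inr false => Fin.lastCases (-1) d
      with hCdef
    set bb : (Fin m ⊕ Bool) → ℝ := fun ι =>
      match ι with
      | Sum.inl i => b i
      | Sum.inr _ => 0
      with hbbdef
    have hrow : ∀ (ι : Fin m ⊕ Bool) (z : Fin (n+1) → ℝ),
        (∑ j, C ι j * z j)
          = (∑ j : Fin n, C ι j.castSucc * z j.castSucc) + C ι (Fin.last n) * z (Fin.last n) :=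
      fun ι z => Fin.sum_univ_castSucc _
    have hcs : ∀ (s : ℝ) (r : Fin n → ℝ) (j : Fin n),
        (Fin.lastCases s r : ∀ _ : Fin (n+1), ℝ) j.castSucc = r j := fun s r j =>
      Fin.lastCases_castSucc ..
    have hls : ∀ (s : ℝ) (r : Fin n → ℝ),
        (Fin.lastCases s r : ∀ _ : Fin (n+1), ℝ) (Fin.last n) = s := fun s r =>
      Fin.lastCases_last ..
    have hkey : Shat = {z : Fin (n+1) → ℝ | ∀ ι, (∑ j, C ι j * z j) ≤ bb ι} := by
      ext z
      simp only [hShat, mem_setOf_eq, hSrepr]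
      constructor
      · rintro ⟨hz1, hz2⟩ ι
        match ι with
        | Sum.inl i =>
          rw [hrow (Sum.inl i) z]
          show (∑ j : Fin n, (Fin.lastCases 0 (A i) : ∀ _ : Fin (n+1), ℝ) j.castSucc * z j.castSucc)
            + (Fin.lastCases 0 (A i) : ∀ _ : Fin (n+1), ℝ) (Fin.last n) * z (Fin.last n) ≤ b i
          rw [hls]
          have : (∑ j : Fin n, (Fin.lastCases 0 (A i) : ∀ _ : Fin (n+1), ℝ) j.castSucc * z j.castSucc)
              = ∑ j : Fin n, A i j * z j.castSucc := by
            refine Finset.sum_congr rfl fun j _ => ?_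
            rw [hcs]
          rw [this]
          simpa using hz1 i
        | Sum.inr true =>
          rw [hrow (Sum.inr true) z]
          show (∑ j : Fin n, (Fin.lastCases 1 (fun j => -d j) : ∀ _ : Fin (n+1), ℝ) j.castSucc * z j.castSucc)
            + (Fin.lastCases 1 (fun j => -d j) : ∀ _ : Fin (n+1), ℝ) (Fin.last n) * z (Fin.last n) ≤ 0
          rw [hls]
          have : (∑ j : Fin n, (Fin.lastCases 1 (fun j => -d j) : ∀ _ : Fin (n+1), ℝ) j.castSucc * z j.castSucc)
              = -∑ j : Fin n, d j * z j.castSucc := by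
            rw [← Finset.sum_neg_distrib]
            refine Finset.sum_congr rfl fun j _ => ?_
            rw [hcs]; ring
          rw [this]
          rw [hz2]
          ring_nf
          exact le_refl 0
        | Sum.inr false =>
          rw [hrow (Sum.inr false) z]
          show (∑ j : Fin n, (Fin.lastCases (-1) d : ∀ _ : Fin (n+1), ℝ) j.castSucc * z j.castSucc)
            + (Fin.lastCases (-1) d : ∀ _ : Fin (n+1), ℝ) (Fin.last n) * z (Fin.last n) ≤ 0
          rw [hls]
          have : (∑ j : Fin n, (Fin.lastCases (-1) d : ∀ _ : Fin (n+1), ℝ) j.castSucc * z j.castSucc)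
              = ∑ j : Fin n, d j * z j.castSucc := by
            refine Finset.sum_congr rfl fun j _ => ?_
            rw [hcs]
          rw [this, hz2]
          ring_nf
          exact le_refl 0
      · intro hz
        have h1 : ∀ i : Fin m, (∑ j, A i j * z j.castSucc) ≤ b i := by
          intro i
          have hh := hz (Sum.inl i)
          rw [hrow (Sum.inl i) z] at hh
          have e1 : (∑ j : Fin n, C (Sum.inl i) j.castSucc * z j.castSucc)
              = ∑ j : Fin n, A i j * z j.castSucc := by
            refine Finset.sum_congr rfl fun j _ => ?_
            show (Fin.lastCases 0 (A i) : ∀ _ : Fin (n+1), ℝ) j.castSucc * z j.castSucc = _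
            rw [hcs]
          have e2 : C (Sum.inl i) (Fin.last n) = 0 := hls ..
          rw [e1, e2] at hh
          simpa using hh
        have h2 := hz (Sum.inr true)
        have h3 := hz (Sum.inr false)
        rw [hrow (Sum.inr true) z] at h2
        rw [hrow (Sum.inr false) z] at h3
        have e2 : (∑ j : Fin n, C (Sum.inr true) j.castSucc * z j.castSucc)
            = -∑ j : Fin n, d j * z j.castSucc := by
          rw [← Finset.sum_neg_distrib]
          refine Finset.sum_congr rfl fun j _ => ?_
          show (Fin.lastCases 1 (fun j => -d j) : ∀ _ : Fin (n+1), ℝ) j.castSucc * z j.castSucc = _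
          rw [hcs]; ring
        have e2' : C (Sum.inr true) (Fin.last n) = 1 := hls ..
        have e3 : (∑ j : Fin n, C (Sum.inr false) j.castSucc * z j.castSucc)
            = ∑ j : Fin n, d j * z j.castSucc := by
          refine Finset.sum_congr rfl fun j _ => ?_
          show (Fin.lastCases (-1) d : ∀ _ : Fin (n+1), ℝ) j.castSucc * z j.castSucc = _
          rw [hcs]
        have e3' : C (Sum.inr false) (Fin.last n) = -1 := hls ..
        rw [e2, e2'] at h2
        rw [e3, e3'] at h3
        have hbb2 : bb (Sum.inr true) = 0 := rfl
        have hbb3 : bb (Sum.inr false) = 0 := rfl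
        rw [hbb2] at h2; rw [hbb3] at h3
        exact ⟨h1, by linarith⟩
    rw [hkey]
    exact isPolyR_fintype C bb
  obtain ⟨x₀, hx₀⟩ := hne
  have hsnoc_mem : ∀ x ∈ S, (Fin.snoc x (∑ i, d i * x i) : Fin (n+1) → ℝ) ∈ Shat := by
    intro x hx
    constructor
    · simpa [Fin.snoc_castSucc] using hx
    · simp [Fin.snoc_last, Fin.snoc_castSucc]
  have hnehat : Shat.Nonempty := ⟨_, hsnoc_mem x₀ hx₀⟩
  have himg : (fun z : Fin (n+1) → ℝ => z (Fin.last n)) '' Shat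
      = (fun x => ∑ i, d i * x i) '' S := by
    ext r
    constructor
    · rintro ⟨z, ⟨hz1, hz2⟩, rfl⟩
      exact ⟨_, hz1, hz2.symm⟩
    · rintro ⟨x, hx, rfl⟩
      exact ⟨_, hsnoc_mem x hx, by simp [Fin.snoc_last]⟩
  have hbddhat : BddAbove ((fun z : Fin (n+1) → ℝ => z (Fin.last n)) '' Shat) := by
    rw [himg]; exact hbdd
  obtain ⟨z, ⟨hz1, hz2⟩, hmax⟩ := poly_max_last Shat hpolyhat hnehat hbddhat
  refine ⟨_, hz1, fun w hw => ?_⟩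
  have := hmax _ (hsnoc_mem w hw)
  rw [hz2] at this
  simpa [Fin.snoc_last] using this


lemma width_ge_of_pair {n : ℕ} (K : Set (Fin n → ℝ)) (cc : Fin n → ℝ) {x y : Fin n → ℝ}
    (hx : x ∈ K) (hy : y ∈ K) (w : ℝ)
    (h : w ≤ (∑ i, cc i * x i) - ∑ i, cc i * y i) : (w : EReal) ≤ widthAlong K cc := by
  have h1 : ((∑ i, cc i * x i : ℝ) : EReal)
      ≤ sSup ((fun x => ((∑ i, cc i * x i : ℝ) : EReal)) '' K) := le_sSup ⟨x, hx, rfl⟩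
  have h2 : sInf ((fun x => ((∑ i, cc i * x i : ℝ) : EReal)) '' K)
      ≤ ((∑ i, cc i * y i : ℝ) : EReal) := sInf_le ⟨y, hy, rfl⟩
  calc (w : EReal) ≤ (((∑ i, cc i * x i) - ∑ i, cc i * y i : ℝ) : EReal) :=
        EReal.coe_le_coe_iff.mpr h
    _ = ((∑ i, cc i * x i : ℝ) : EReal) - ((∑ i, cc i * y i : ℝ) : EReal) :=
        EReal.coe_sub _ _
    _ ≤ widthAlong K cc := EReal.sub_le_sub h1 h2

lemma width_const {n : ℕ} (K : Set (Fin n → ℝ)) (cc : Fin n → ℝ) (γ : ℝ) (hne : K.Nonempty)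
    (h : ∀ x ∈ K, (∑ i, cc i * x i) = γ) : widthAlong K cc = 0 := by
  have himg : (fun x => ((∑ i, cc i * x i : ℝ) : EReal)) '' K = {(γ : EReal)} := by
    ext r
    constructor
    · rintro ⟨x, hx, rfl⟩
      simp [h x hx]
    · rintro rfl
      obtain ⟨x, hx⟩ := hne
      exact ⟨x, hx, by simp [h x hx]⟩
  unfold widthAlong
  rw [himg, sSup_singleton, sInf_singleton, ← EReal.coe_sub, sub_self]
  rfl

lemma spread_of_width {n : ℕ} (S : Set (Fin n → ℝ)) (hpoly : IsPolyR S) (hne : S.Nonempty)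
    (d : Fin n → ℝ) (T : ℝ) (hw : (T : EReal) ≤ widthAlong S d) :
    ∃ x ∈ S, ∃ y ∈ S, T ≤ (∑ i, d i * x i) - ∑ i, d i * y i := by
  obtain ⟨x₀, hx₀⟩ := hne
  by_cases hba : BddAbove ((fun x => ∑ i, d i * x i) '' S)
  · by_cases hbb : BddBelow ((fun x => ∑ i, d i * x i) '' S)
    · set s := sSup ((fun x => ∑ i, d i * x i) '' S) with hs
      set ι := sInf ((fun x => ∑ i, d i * x i) '' S) with hι
      have hA : sSup ((fun x => ((∑ i, d i * x i : ℝ) : EReal)) '' S) ≤ (s : EReal) := by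
        apply sSup_le
        rintro _ ⟨x, hx, rfl⟩
        exact EReal.coe_le_coe_iff.mpr (le_csSup hba ⟨x, hx, rfl⟩)
      have hB : (ι : EReal) ≤ sInf ((fun x => ((∑ i, d i * x i : ℝ) : EReal)) '' S) := by
        apply le_sInf
        rintro _ ⟨x, hx, rfl⟩
        exact EReal.coe_le_coe_iff.mpr (csInf_le hbb ⟨x, hx, rfl⟩)
      have hTs : T ≤ s - ι := by
        have : (T : EReal) ≤ (s : EReal) - (ι : EReal) :=
          le_trans hw (EReal.sub_le_sub hA hB)
        rw [← EReal.coe_sub] at this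
        exact EReal.coe_le_coe_iff.mp this
      obtain ⟨xs, hxs, hxsmax⟩ := poly_attains S hpoly ⟨x₀, hx₀⟩ d hba
      have hbb' : BddAbove ((fun x => ∑ i, (fun i => -d i) i * x i) '' S) := by
        obtain ⟨L, hL⟩ := hbb
        refine ⟨-L, ?_⟩
        rintro _ ⟨x, hx, rfl⟩
        have h1 : L ≤ ∑ i, d i * x i := hL ⟨x, hx, rfl⟩
        have h2 : (∑ i, (fun i => -d i) i * x i) = -∑ i, d i * x i := by
          rw [← Finset.sum_neg_distrib]
          exact Finset.sum_congr rfl fun j _ => by ring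
        show (∑ i, (fun i => -d i) i * x i) ≤ -L
        rw [h2]
        linarith
      obtain ⟨ys, hys, hysmax⟩ := poly_attains S hpoly ⟨x₀, hx₀⟩ (fun i => -d i) hbb'
      have hysmin : ∀ w ∈ S, (∑ i, d i * ys i) ≤ ∑ i, d i * w i := by
        intro w hw'
        have := hysmax w hw'
        have e1 : (∑ i, (fun i => -d i) i * w i) = -∑ i, d i * w i := by
          rw [← Finset.sum_neg_distrib]; exact Finset.sum_congr rfl fun j _ => by ring
        have e2 : (∑ i, (fun i => -d i) i * ys i) = -∑ i, d i * ys i := by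
          rw [← Finset.sum_neg_distrib]; exact Finset.sum_congr rfl fun j _ => by ring
        rw [e1, e2] at this
        linarith
      refine ⟨xs, hxs, ys, hys, ?_⟩
      have h3 : s ≤ ∑ i, d i * xs i := csSup_le ⟨_, ⟨x₀, hx₀, rfl⟩⟩
        (by rintro _ ⟨x, hx, rfl⟩; exact hxsmax x hx)
      have h4 : (∑ i, d i * ys i) ≤ ι := le_csInf ⟨_, ⟨x₀, hx₀, rfl⟩⟩
        (by rintro _ ⟨x, hx, rfl⟩; exact hysmin x hx)
      linarith
    · rw [not_bddBelow_iff] at hbb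
      obtain ⟨t, ⟨y, hy, rfl⟩, ht⟩ := hbb ((∑ i, d i * x₀ i) - T)
      exact ⟨x₀, hx₀, y, hy, by linarith⟩
  · rw [not_bddAbove_iff] at hba
    obtain ⟨t, ⟨x, hx, rfl⟩, ht⟩ := hba ((∑ i, d i * x₀ i) + T)
    exact ⟨x, hx, x₀, hx₀, by linarith⟩


set_option maxHeartbeats 2000000 in
/-- If `ω` is a flatness constant for dimension `n`, `P` is a nonempty
rational polyhedron of finite lattice width with `w(P) ≥ ω`, `c` is a width direction
of `P` and `β = min {c·x : x ∈ P}`, then there is an integral point `z ∈ P` with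
`β ≤ c·z ≤ β + ω`. -/
theorem integral_point_in_flat_slab {n : ℕ} (ω : ℝ) (hω : IsFlatnessConstant n ω)
    (P : Set (Fin n → ℝ)) (hP : IsRatPolyhedron P) (hne : P.Nonempty)
    (hfin : latticeWidth P ≠ ⊤)
    (hwide : (ω : EReal) ≤ latticeWidth P)
    (c : Fin n → ℤ) (hc : c ≠ 0)
    (hdir : widthAlong P (fun i => (c i : ℝ)) = latticeWidth P)
    (β : ℝ)
    (hβ : IsLeast {r : ℝ | ∃ x ∈ P, r = ∑ i, (c i : ℝ) * x i} β) :
    ∃ z : Fin n → ℤ, (fun i => (z i : ℝ)) ∈ P ∧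
      β ≤ ∑ i, (c i : ℝ) * (z i : ℝ) ∧ ∑ i, (c i : ℝ) * (z i : ℝ) ≤ β + ω := by
  classical
  obtain ⟨hω0, hflat⟩ := hω
  obtain ⟨m, A, b, hPrepr⟩ := hP
  obtain ⟨hβmem, hβlb⟩ := hβ
  obtain ⟨x₀, hx₀P, hx₀β⟩ := hβmem
  have hPne : P.Nonempty := ⟨x₀, hx₀P⟩
  -- the lattice width is a real number T ≥ ω
  have hlwbot : latticeWidth P ≠ ⊥ := by
    intro h
    rw [h] at hwide
    exact absurd (le_bot_iff.mp hwide) (EReal.coe_ne_bot ω)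
  set T : ℝ := (latticeWidth P).toReal with hTdef
  have hT : latticeWidth P = (T : EReal) := (EReal.coe_toReal hfin hlwbot).symm
  have hωT : ω ≤ T := EReal.coe_le_coe_iff.mp (by rw [← hT]; exact hwide)
  have hT0 : 0 < T := lt_of_lt_of_le hω0 hωT
  -- the infimum of c over P is β
  have hInf : sInf ((fun x => ((∑ i, (c i : ℝ) * x i : ℝ) : EReal)) '' P) = (β : EReal) := by
    apply le_antisymm
    · refine sInf_le ⟨x₀, hx₀P, ?_⟩
      show ((∑ i, (c i : ℝ) * x₀ i : ℝ) : EReal) = (β : EReal)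
      rw [hx₀β]
    · apply le_sInf
      rintro _ ⟨x, hx, rfl⟩
      exact EReal.coe_le_coe_iff.mpr (hβlb ⟨x, hx, rfl⟩)
  have hw0 : sSup ((fun x => ((∑ i, (c i : ℝ) * x i : ℝ) : EReal)) '' P) - (β : EReal)
      = (T : EReal) := by
    rw [← hInf, ← hT, ← hdir]
    rfl
  -- the supremum is σ = T + β
  have hSupTop : sSup ((fun x => ((∑ i, (c i : ℝ) * x i : ℝ) : EReal)) '' P) ≠ ⊤ := by
    intro h
    rw [h, EReal.top_sub_coe] at hw0
    exact (EReal.coe_ne_top T) hw0.symm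
  have hSupBot : sSup ((fun x => ((∑ i, (c i : ℝ) * x i : ℝ) : EReal)) '' P) ≠ ⊥ := by
    intro h
    have h1 : ((∑ i, (c i : ℝ) * x₀ i : ℝ) : EReal)
        ≤ sSup ((fun x => ((∑ i, (c i : ℝ) * x i : ℝ) : EReal)) '' P) := le_sSup ⟨x₀, hx₀P, rfl⟩
    rw [h] at h1
    exact absurd (le_bot_iff.mp h1) (EReal.coe_ne_bot _)
  obtain ⟨σ, hσ⟩ : ∃ σ : ℝ, sSup ((fun x => ((∑ i, (c i : ℝ) * x i : ℝ) : EReal)) '' P)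
      = (σ : EReal) :=
    ⟨_, (EReal.coe_toReal hSupTop hSupBot).symm⟩
  have hσval : σ = T + β := by
    rw [hσ, ← EReal.coe_sub] at hw0
    have := EReal.coe_eq_coe_iff.mp hw0
    linarith
  have hfle : ∀ x ∈ P, (∑ i, (c i : ℝ) * x i) ≤ σ := by
    intro x hx
    have h1 : ((∑ i, (c i : ℝ) * x i : ℝ) : EReal)
        ≤ sSup ((fun x => ((∑ i, (c i : ℝ) * x i : ℝ) : EReal)) '' P) := le_sSup ⟨x, hx, rfl⟩
    rw [hσ] at h1
    exact EReal.coe_le_coe_iff.mp h1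
  -- the shrinking factor
  set l : ℝ := ω / T with hldef
  have hl0 : 0 < l := div_pos hω0 hT0
  have hl1 : l ≤ 1 := (div_le_one hT0).mpr hωT
  have hlT : l * T = ω := by
    rw [hldef]
    exact div_mul_cancel₀ ω (ne_of_gt hT0)
  -- the shrunk polyhedron K₀
  set Ar : Fin m → Fin n → ℝ := fun i j => ((A i j : ℚ) : ℝ) with hArdef
  have hx₀rows : ∀ i, (∑ j, Ar i j * x₀ j) ≤ (b i : ℝ) := by
    rw [hPrepr] at hx₀P; exact hx₀P
  set b' : Fin m → ℝ := fun i => l * (b i : ℝ) + (1 - l) * (∑ j, Ar i j * x₀ j) with hb'def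
  set K₀ : Set (Fin n → ℝ) := {y | ∀ i, (∑ j, Ar i j * y j) ≤ b' i} with hK₀def
  have hpolyK : IsPolyR K₀ := ⟨m, Ar, b', rfl⟩
  set φ : (Fin n → ℝ) → (Fin n → ℝ) := fun x j => x₀ j + l * (x j - x₀ j) with hφdef
  have hlin : ∀ (v : Fin n → ℝ) (x : Fin n → ℝ),
      (∑ j, v j * φ x j) = (1 - l) * (∑ j, v j * x₀ j) + l * (∑ j, v j * x j) := by
    intro v x
    rw [Finset.mul_sum, Finset.mul_sum, ← Finset.sum_add_distrib]
    refine Finset.sum_congr rfl fun j _ => ?_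
    simp only [hφdef]
    ring
  have hφP : ∀ x ∈ P, φ x ∈ K₀ := by
    intro x hx
    rw [hPrepr] at hx
    intro i
    rw [hlin]
    have h1 : l * (∑ j, Ar i j * x j) ≤ l * (b i : ℝ) :=
      mul_le_mul_of_nonneg_left (hx i) (le_of_lt hl0)
    have hb'i : b' i = l * (b i : ℝ) + (1 - l) * (∑ j, Ar i j * x₀ j) := rfl
    rw [hb'i]
    linarith
  have hK₀img : K₀ = φ '' P := by
    apply Subset.antisymm
    · intro y hy
      refine ⟨fun j => x₀ j + (y j - x₀ j) / l, ?_, ?_⟩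
      · rw [hPrepr]
        intro i
        have hrowy := hy i
        have hterm := Finset.sum_congr rfl (fun j (_ : j ∈ Finset.univ) =>
          show Ar i j * (x₀ j + (y j - x₀ j) / l)
              = Ar i j * x₀ j + (Ar i j * y j - Ar i j * x₀ j) / l from by
            field_simp)
        have hrowexp : (∑ j, Ar i j * (x₀ j + (y j - x₀ j) / l))
            = (∑ j, Ar i j * x₀ j) + ((∑ j, Ar i j * y j) - (∑ j, Ar i j * x₀ j)) / l := by
          rw [hterm, Finset.sum_add_distrib, ← Finset.sum_div, Finset.sum_sub_distrib]
        rw [hrowexp]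
        have h5 : ((∑ j, Ar i j * y j) - (∑ j, Ar i j * x₀ j)) / l
            ≤ (b' i - (∑ j, Ar i j * x₀ j)) / l := by
          have h7 : (∑ j, Ar i j * y j) - (∑ j, Ar i j * x₀ j) ≤ b' i - (∑ j, Ar i j * x₀ j) := by
            linarith [hy i]
          exact (div_le_div_iff_of_pos_right hl0).mpr h7
        have h6 : (b' i - (∑ j, Ar i j * x₀ j)) / l = (b i : ℝ) - (∑ j, Ar i j * x₀ j) := by
          have hb'i : b' i = l * (b i : ℝ) + (1 - l) * (∑ j, Ar i j * x₀ j) := rfl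
          rw [hb'i]
          field_simp
          ring
        rw [h6] at h5
        linarith
      · funext j
        show x₀ j + l * ((x₀ j + (y j - x₀ j) / l) - x₀ j) = y j
        field_simp
        ring
    · rintro _ ⟨x, hx, rfl⟩
      exact hφP x hx
  have hK₀P : K₀ ⊆ P := by
    intro y hy
    rw [hPrepr]
    intro i
    have h1 := hy i
    have h2 : b' i ≤ (b i : ℝ) := by
      simp only [hb'def]
      nlinarith [hx₀rows i, hl0, hl1]
    linarith
  have hfφ : ∀ x, (∑ i, (c i : ℝ) * φ x i) = (1 - l) * β + l * (∑ i, (c i : ℝ) * x i) := by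
    intro x
    rw [hlin, ← hx₀β]
  have hfK₀ : ∀ y ∈ K₀, (∑ i, (c i : ℝ) * y i) ≤ β + ω := by
    intro y hy
    rw [hK₀img] at hy
    obtain ⟨x, hx, rfl⟩ := hy
    rw [hfφ]
    have h1 : l * (∑ i, (c i : ℝ) * x i) ≤ l * σ :=
      mul_le_mul_of_nonneg_left (hfle x hx) (le_of_lt hl0)
    have : (1 - l) * β + l * σ = β + ω := by
      rw [hσval, ← hlT]
      ring
    linarith
  -- dichotomy: either an interior-ish point, or some nontrivial row is constant on P
  by_cases hall : ∀ i : Fin m, (∃ j, A i j ≠ 0) → ∃ x ∈ P, (∑ j, Ar i j * x j) < (b i : ℝ)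
  case neg =>
    exfalso
    push_neg at hall
    obtain ⟨i, hAi0, hnost⟩ := hall
    have hconst : ∀ x ∈ P, (∑ j, Ar i j * x j) = (b i : ℝ) := by
      intro x hx
      refine le_antisymm ?_ (hnost x hx)
      rw [hPrepr] at hx
      exact hx i
    set N : ℤ := ∏ k, ((A i k).den : ℤ) with hNdef
    set c' : Fin n → ℤ := fun j => (A i j).num * ∏ k ∈ Finset.univ.erase j, ((A i k).den : ℤ)
      with hc'def
    have hq : ∀ j, ((c' j : ℤ) : ℚ) = A i j * (N : ℚ) := by
      intro j
      have h1 : ((A i j).num : ℚ) = A i j * ((A i j).den : ℚ) := by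
        rw [mul_comm, Rat.den_mul_eq_num (q := A i j)]
      have h2 : (N : ℚ) = ((A i j).den : ℚ) * ∏ k ∈ Finset.univ.erase j, ((A i k).den : ℚ) := by
        rw [hNdef]
        push_cast
        exact (Finset.mul_prod_erase Finset.univ (fun k => ((A i k).den : ℚ))
          (Finset.mem_univ j)).symm
      have h3 : ((c' j : ℤ) : ℚ)
          = ((A i j).num : ℚ) * ∏ k ∈ Finset.univ.erase j, ((A i k).den : ℚ) := by
        rw [hc'def]
        push_cast
        ring
      rw [h3, h1, h2]
      ring
    have hcast : ∀ j, ((c' j : ℤ) : ℝ) = Ar i j * ((N : ℤ) : ℝ) := by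
      intro j
      have := hq j
      have h4 : (((c' j : ℤ) : ℚ) : ℝ) = ((A i j * (N : ℚ) : ℚ) : ℝ) := by rw [this]
      push_cast at h4 ⊢
      convert h4 using 2
    have hc'ne : c' ≠ 0 := by
      obtain ⟨j0, hj0⟩ := hAi0
      intro h
      have : c' j0 = 0 := congrFun h j0
      rw [hc'def] at this
      have hnum : (A i j0).num ≠ 0 := Rat.num_ne_zero.mpr hj0
      have hprod : (∏ k ∈ Finset.univ.erase j0, ((A i k).den : ℤ)) ≠ 0 := by
        apply Finset.prod_ne_zero_iff.mpr
        intro k _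
        exact_mod_cast (A i k).den_nz
      exact (mul_ne_zero hnum hprod) this
    have hwzero : widthAlong P (fun j => (c' j : ℝ)) = 0 := by
      apply width_const P _ (((N : ℤ) : ℝ) * (b i : ℝ)) hPne
      intro x hx
      have : (∑ j, (c' j : ℝ) * x j) = ((N : ℤ) : ℝ) * ∑ j, Ar i j * x j := by
        rw [Finset.mul_sum]
        refine Finset.sum_congr rfl fun j _ => ?_
        rw [hcast j]
        ring
      rw [this, hconst x hx]
    have hle0 : latticeWidth P ≤ 0 := by
      have := sInf_le (α := EReal) (show widthAlong P (fun j => (c' j : ℝ))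
        ∈ {w : EReal | ∃ cc : Fin n → ℤ, cc ≠ 0 ∧ w = widthAlong P (fun i => (cc i : ℝ))}
        from ⟨c', hc'ne, rfl⟩)
      rw [hwzero] at this
      exact this
    have : (ω : EReal) ≤ 0 := le_trans hwide hle0
    have : ω ≤ 0 := by exact_mod_cast this
    linarith
  case pos =>
  -- construct a point with all nontrivial rows strict
  set xs : Fin m → (Fin n → ℝ) := fun i =>
    if h : ∃ j, A i j ≠ 0 then (hall i h).choose else x₀ with hxsdef
  have hxsP : ∀ i, xs i ∈ P := by
    intro i
    simp only [hxsdef]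
    by_cases h : ∃ j, A i j ≠ 0
    · rw [dif_pos h]; exact (hall i h).choose_spec.1
    · rw [dif_neg h]; exact hx₀P
  have hxsstrict : ∀ i, (∃ j, A i j ≠ 0) → (∑ j, Ar i j * xs i j) < (b i : ℝ) := by
    intro i h
    simp only [hxsdef]
    simp only [dif_pos h]
    exact (hall i h).choose_spec.2
  set pts : Fin (m+1) → (Fin n → ℝ) := Fin.cons x₀ xs with hptsdef
  have hptsP : ∀ i, pts i ∈ P := by
    intro i
    refine Fin.cases ?_ ?_ i
    · simp only [hptsdef, Fin.cons_zero]; exact hx₀P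
    · intro k; simp only [hptsdef, Fin.cons_succ]; exact hxsP k
  have hm1 : (0 : ℝ) < (m + 1 : ℝ) := by positivity
  set xb : Fin n → ℝ := fun j => (∑ i, pts i j) / (m + 1 : ℝ) with hxbdef
  have hrowxb : ∀ (v : Fin n → ℝ),
      (∑ j, v j * xb j) = (∑ i : Fin (m+1), ∑ j, v j * pts i j) / (m + 1 : ℝ) := by
    intro v
    calc (∑ j, v j * xb j) = ∑ j, (∑ i : Fin (m+1), v j * pts i j) / (m + 1 : ℝ) := by
          refine Finset.sum_congr rfl fun j _ => ?_
          simp only [hxbdef]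
          rw [← mul_div_assoc, Finset.mul_sum]
      _ = (∑ j, ∑ i : Fin (m+1), v j * pts i j) / (m + 1 : ℝ) := by
          rw [Finset.sum_div]
      _ = (∑ i : Fin (m+1), ∑ j, v j * pts i j) / (m + 1 : ℝ) := by
          rw [Finset.sum_comm]
  have hxbP : xb ∈ P := by
    rw [hPrepr]
    intro k
    rw [hrowxb]
    rw [div_le_iff₀ hm1]
    have h1 : (∑ i : Fin (m+1), ∑ j, Ar k j * pts i j)
        ≤ ∑ _i : Fin (m+1), (b k : ℝ) := by
      apply Finset.sum_le_sum
      intro i _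
      have := hptsP i
      rw [hPrepr] at this
      exact this k
    rw [Finset.sum_const, Finset.card_univ, Fintype.card_fin] at h1
    calc (∑ i : Fin (m+1), ∑ j, Ar k j * pts i j) ≤ (m+1 : ℕ) • (b k : ℝ) := h1
      _ = (b k : ℝ) * (m + 1 : ℝ) := by
        rw [nsmul_eq_mul]
        push_cast
        ring
  have hxbstrict : ∀ k, (∃ j, A k j ≠ 0) → (∑ j, Ar k j * xb j) < (b k : ℝ) := by
    intro k hk
    rw [hrowxb]
    rw [div_lt_iff₀ hm1]
    have h1 : (∑ i : Fin (m+1), ∑ j, Ar k j * pts i j)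
        < ∑ _i : Fin (m+1), (b k : ℝ) := by
      apply Finset.sum_lt_sum
      · intro i _
        have := hptsP i
        rw [hPrepr] at this
        exact this k
      · refine ⟨Fin.succ k, Finset.mem_univ _, ?_⟩
        have : pts (Fin.succ k) = xs k := by rw [hptsdef]; exact Fin.cons_succ _ _ _
        rw [this]
        exact hxsstrict k hk
    rw [Finset.sum_const, Finset.card_univ, Fintype.card_fin] at h1
    calc (∑ i : Fin (m+1), ∑ j, Ar k j * pts i j) < (m+1 : ℕ) • (b k : ℝ) := h1
      _ = (b k : ℝ) * (m + 1 : ℝ) := by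
        rw [nsmul_eq_mul]; push_cast; ring
  -- the interior-ish point of K₀
  set xhat : Fin n → ℝ := φ xb with hxhatdef
  have hxhatK₀ : xhat ∈ K₀ := hφP xb hxbP
  have hxhatstrict : ∀ k, (∃ j, A k j ≠ 0) → (∑ j, Ar k j * xhat j) < b' k := by
    intro k hk
    rw [hxhatdef, hlin]
    have h1 : l * (∑ j, Ar k j * xb j) < l * (b k : ℝ) :=
      mul_lt_mul_of_pos_left (hxbstrict k hk) hl0
    have hb'k : b' k = l * (b k : ℝ) + (1 - l) * (∑ j, Ar k j * x₀ j) := rfl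
    rw [hb'k]
    linarith
  -- an open neighbourhood of xhat inside K₀
  set δ : Fin m → ℝ := fun k => if (∑ j, Ar k j * xhat j) < b' k then 0 else 1 with hδdef
  set U : Set (Fin n → ℝ) := {y | ∀ k, (∑ j, Ar k j * y j) < b' k + δ k} with hUdef
  have hUopen : IsOpen U := by
    have hU2 : U = ⋂ k, {y : Fin n → ℝ | (∑ j, Ar k j * y j) < b' k + δ k} := by
      ext y; simp [hUdef, Set.mem_iInter]
    rw [hU2]
    refine isOpen_iInter_of_finite fun k => ?_
    exact isOpen_lt (continuous_finset_sum _ fun j _ => continuous_const.mul (continuous_apply j))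
      continuous_const
  have hxhatU : xhat ∈ U := by
    intro k
    simp only [hδdef]
    by_cases hks : (∑ j, Ar k j * xhat j) < b' k
    · rw [if_pos hks]; linarith
    · rw [if_neg hks]
      have := hxhatK₀ k
      linarith
  have hUK₀ : U ⊆ K₀ := by
    intro y hy k
    by_cases hks : (∑ j, Ar k j * xhat j) < b' k
    · have := hy k
      simp only [hδdef] at this
      rw [if_pos hks] at this
      linarith
    · have hzero : ∀ j, A k j = 0 := by
        by_contra hcon
        push_neg at hcon
        exact hks (hxhatstrict k hcon)
      have hrowy : (∑ j, Ar k j * y j) = 0 := by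
        apply Finset.sum_eq_zero
        intro j _
        have : Ar k j = 0 := by rw [hArdef]; simp [hzero j]
        rw [this, zero_mul]
      have hrowxhat : (∑ j, Ar k j * xhat j) = 0 := by
        apply Finset.sum_eq_zero
        intro j _
        have : Ar k j = 0 := by rw [hArdef]; simp [hzero j]
        rw [this, zero_mul]
      have := hxhatK₀ k
      rw [hrowxhat] at this
      rw [hrowy]
      exact this
  obtain ⟨ε, hε0, hball⟩ := Metric.isOpen_iff.mp hUopen xhat hxhatU
  set r : ℝ := ε / 2 with hrdef
  have hr0 : 0 < r := by positivity
  have hballK₀ : Metric.ball xhat ε ⊆ K₀ := le_trans hball hUK₀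
  -- spread pairs for every nonzero integral direction
  have hSP : ∀ d : Fin n → ℤ, d ≠ 0 → ∃ p : (Fin n → ℝ) × (Fin n → ℝ),
      p.1 ∈ K₀ ∧ p.2 ∈ K₀ ∧
      ω ≤ (∑ i, (d i : ℝ) * p.1 i) - ∑ i, (d i : ℝ) * p.2 i := by
    intro d hd0
    have hwd : (T : EReal) ≤ widthAlong P (fun i => (d i : ℝ)) := by
      have h : latticeWidth P ≤ widthAlong P (fun i => (d i : ℝ)) :=
        sInf_le ⟨d, hd0, rfl⟩
      rw [hT] at h
      exact h
    obtain ⟨x, hx, y, hy, hxy⟩ := spread_of_width P ⟨m, Ar, fun i => (b i : ℝ), hPrepr⟩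
      hPne (fun i => (d i : ℝ)) T hwd
    refine ⟨(φ x, φ y), hφP x hx, hφP y hy, ?_⟩
    show ω ≤ (∑ i, (d i : ℝ) * φ x i) - ∑ i, (d i : ℝ) * φ y i
    rw [hlin, hlin]
    have h1 : l * T ≤ l * ((∑ i, (d i : ℝ) * x i) - ∑ i, (d i : ℝ) * y i) :=
      mul_le_mul_of_nonneg_left hxy (le_of_lt hl0)
    rw [hlT] at h1
    linarith
  -- the threshold and the finite set of small directions
  set N : ℕ := ⌈ω / (2 * r)⌉₊ with hNdef
  set Dfin : Finset (Fin n → ℤ) := Fintype.piFinset (fun _ => Finset.Icc (-(N:ℤ)) (N:ℤ))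
    with hDfindef
  set pc : (Fin n → ℤ) → ((Fin n → ℝ) × (Fin n → ℝ)) := fun d =>
    if h : ∃ p : (Fin n → ℝ) × (Fin n → ℝ), p.1 ∈ K₀ ∧ p.2 ∈ K₀ ∧
        ω ≤ (∑ i, (d i : ℝ) * p.1 i) - ∑ i, (d i : ℝ) * p.2 i
    then h.choose else (xhat, xhat) with hpcdef
  set Rstar : ℝ := ε + ∑ d ∈ Dfin, (dist ((pc d).1) xhat + dist ((pc d).2) xhat)
    with hRstardef
  have hsumnn : ∀ d ∈ Dfin, 0 ≤ dist ((pc d).1) xhat + dist ((pc d).2) xhat := by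
    intro d _
    positivity
  have hRstarε : ε ≤ Rstar := le_add_of_nonneg_right (Finset.sum_nonneg hsumnn)
  have hRstar0 : 0 < Rstar := lt_of_lt_of_le hε0 hRstarε
  set Kstar : Set (Fin n → ℝ) := K₀ ∩ Metric.closedBall xhat Rstar with hKstardef
  -- Kstar is bounded closed convex of positive volume
  have hbounded : Bornology.IsBounded Kstar :=
    (Metric.isBounded_closedBall).subset Set.inter_subset_right
  have hK₀closed : IsClosed K₀ := by
    have hK2 : K₀ = ⋂ i, {y : Fin n → ℝ | (∑ j, Ar i j * y j) ≤ b' i} := by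
      ext y; simp [hK₀def, Set.mem_iInter]
    rw [hK2]
    exact isClosed_iInter fun i => isClosed_le
      (continuous_finset_sum _ fun j _ => continuous_const.mul (continuous_apply j))
      continuous_const
  have hclosed : IsClosed Kstar := hK₀closed.inter Metric.isClosed_closedBall
  have hconvex : Convex ℝ Kstar := by
    have hK2 : K₀ = ⋂ i, {y : Fin n → ℝ | (∑ j, Ar i j * y j) ≤ b' i} := by
      ext y; simp [hK₀def, Set.mem_iInter]
    have hK₀convex : Convex ℝ K₀ := by
      rw [hK2]
      refine convex_iInter fun i => ?_
      refine convex_halfSpace_le ?_ (b' i)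
      constructor
      · intro x y
        rw [← Finset.sum_add_distrib]
        exact Finset.sum_congr rfl fun j _ => by simp [Pi.add_apply]; ring
      · intro a x
        rw [Finset.smul_sum]
        exact Finset.sum_congr rfl fun j _ => by simp [Pi.smul_apply, smul_eq_mul]; ring
    exact hK₀convex.inter (convex_closedBall _ _)
  have hballKstar : Metric.ball xhat ε ⊆ Kstar := by
    intro y hy
    exact ⟨hballK₀ hy, Metric.closedBall_subset_closedBall hRstarε
      (Metric.ball_subset_closedBall hy)⟩
  have hvol : MeasureTheory.volume Kstar ≠ 0 := by
    have h1 : 0 < MeasureTheory.volume (Metric.ball xhat ε) :=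
      Metric.measure_ball_pos _ _ hε0
    exact (lt_of_lt_of_le h1 (MeasureTheory.measure_mono hballKstar)).ne'
  -- lattice width of Kstar is at least ω
  have hlwKstar : (ω : EReal) ≤ latticeWidth Kstar := by
    apply le_sInf
    rintro w ⟨d, hd0, rfl⟩
    by_cases hD : ∀ j, |d j| ≤ (N : ℤ)
    · -- small direction: use the chosen spread pair
      have hdD : d ∈ Dfin := by
        have : d ∈ Fintype.piFinset (fun _ : Fin n => Finset.Icc (-(N:ℤ)) (N:ℤ)) :=
          Fintype.mem_piFinset.mpr (fun j => Finset.mem_Icc.mpr (abs_le.mp (hD j)))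
        rw [hDfindef]
        exact this
      have hsp := hSP d hd0
      have hpc : (pc d).1 ∈ K₀ ∧ (pc d).2 ∈ K₀ ∧
          ω ≤ (∑ i, (d i : ℝ) * (pc d).1 i) - ∑ i, (d i : ℝ) * (pc d).2 i := by
        simp only [hpcdef]
        rw [dif_pos hsp]
        exact hsp.choose_spec
      have hd1 : dist ((pc d).1) xhat ≤ Rstar := by
        rw [hRstardef]
        have h2 : dist ((pc d).1) xhat + dist ((pc d).2) xhat
            ≤ ∑ d' ∈ Dfin, (dist ((pc d').1) xhat + dist ((pc d').2) xhat) :=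
          Finset.single_le_sum hsumnn hdD
        have := dist_nonneg (x := (pc d).2) (y := xhat)
        linarith
      have hd2 : dist ((pc d).2) xhat ≤ Rstar := by
        rw [hRstardef]
        have h2 : dist ((pc d).1) xhat + dist ((pc d).2) xhat
            ≤ ∑ d' ∈ Dfin, (dist ((pc d').1) xhat + dist ((pc d').2) xhat) :=
          Finset.single_le_sum hsumnn hdD
        have := dist_nonneg (x := (pc d).1) (y := xhat)
        linarith
      exact width_ge_of_pair Kstar _ ⟨hpc.1, Metric.mem_closedBall.mpr hd1⟩
        ⟨hpc.2.1, Metric.mem_closedBall.mpr hd2⟩ ω hpc.2.2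
    · -- big direction: use points of the ball
      push_neg at hD
      obtain ⟨j0, hj0⟩ := hD
      set u : Fin n → ℝ := fun j => if 0 ≤ (d j : ℝ) then 1 else -1 with hudef
      set yp : Fin n → ℝ := fun j => xhat j + r * u j with hypdef
      set ym : Fin n → ℝ := fun j => xhat j - r * u j with hymdef
      have huabs : ∀ j, |r * u j| = r := by
        intro j
        simp only [hudef]
        by_cases h : 0 ≤ (d j : ℝ)
        · rw [if_pos h]; simp [abs_of_pos hr0]
        · rw [if_neg h]; rw [abs_of_nonpos (by linarith [hr0])]; ring
      have hypball : yp ∈ Metric.ball xhat ε := by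
        rw [Metric.mem_ball]
        rw [dist_pi_lt_iff hε0]
        intro j
        rw [Real.dist_eq]
        have : yp j - xhat j = r * u j := by simp only [hypdef]; ring
        rw [this, huabs j, hrdef]
        linarith
      have hymball : ym ∈ Metric.ball xhat ε := by
        rw [Metric.mem_ball]
        rw [dist_pi_lt_iff hε0]
        intro j
        rw [Real.dist_eq]
        have : ym j - xhat j = -(r * u j) := by simp only [hymdef]; ring
        rw [this, abs_neg, huabs j, hrdef]
        linarith
      have hterm : ∀ i, (d i : ℝ) * (2 * (r * u i)) = 2 * r * |(d i : ℝ)| := by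
        intro i
        simp only [hudef]
        by_cases h : 0 ≤ (d i : ℝ)
        · rw [if_pos h, abs_of_nonneg h]; ring
        · rw [if_neg h, abs_of_neg (lt_of_not_ge h)]; ring
      have hspread : ω ≤ (∑ i, (d i : ℝ) * yp i) - ∑ i, (d i : ℝ) * ym i := by
        have hdiff : (∑ i, (d i : ℝ) * yp i) - (∑ i, (d i : ℝ) * ym i)
            = ∑ i, (d i : ℝ) * (2 * (r * u i)) := by
          rw [← Finset.sum_sub_distrib]
          refine Finset.sum_congr rfl fun i _ => ?_
          simp only [hypdef, hymdef]
          ring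
        rw [hdiff]
        have h1 : (∑ i, (d i : ℝ) * (2 * (r * u i))) = ∑ i, 2 * r * |(d i : ℝ)| := by
          exact Finset.sum_congr rfl fun i _ => hterm i
        rw [h1]
        have h2 : 2 * r * |(d j0 : ℝ)| ≤ ∑ i, 2 * r * |(d i : ℝ)| := by
          apply Finset.single_le_sum (f := fun i => 2 * r * |(d i : ℝ)|)
          · intro i _
            positivity
          · exact Finset.mem_univ j0
        have h3 : ((N : ℝ) + 1) ≤ |(d j0 : ℝ)| := by
          have hz1 : (N : ℤ) + 1 ≤ |d j0| := Int.add_one_le_iff.mpr hj0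
          calc ((N : ℝ) + 1) = (((N : ℤ) + 1 : ℤ) : ℝ) := by push_cast; ring
            _ ≤ ((|d j0| : ℤ) : ℝ) := by exact_mod_cast hz1
            _ = |(d j0 : ℝ)| := by push_cast; ring
        have h5 : ω / (2 * r) ≤ (N : ℝ) := Nat.le_ceil _
        have h6 : ω ≤ 2 * r * ((N : ℝ) + 1) := by
          have h7 : ω = 2 * r * (ω / (2 * r)) := by field_simp
          nlinarith [hr0]
        nlinarith [hr0, abs_nonneg ((d j0 : ℝ))]
      exact width_ge_of_pair Kstar _ (hballKstar hypball) (hballKstar hymball) ω hspread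
  obtain ⟨z, hz⟩ := hflat Kstar hbounded hclosed hconvex hvol hlwKstar
  have hzK₀ : (fun i => (z i : ℝ)) ∈ K₀ := hz.1
  have hzP : (fun i => (z i : ℝ)) ∈ P := hK₀P hzK₀
  exact ⟨z, hzP, hβlb ⟨_, hzP, rfl⟩, hfK₀ _ hzK₀⟩
end

section
/- Let ω > 0 be a flatness constant for dimension n, let A ∈ ℚ^{m×n}, and for b ∈ ℝ^m let P_b := {x ∈ ℝⁿ : A x ≤ b}. If the polyhedron P_0 = {x : A x ≤ 0} has infinite lattice width (w_c(P_0) = +∞ for every nonzero c ∈ ℤⁿ), then for every b ∈ ℝ^m with P_b nonempty, P_b contains a point of ℤⁿ. -/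
open Matrix Set MeasureTheory

def Pb {m n : ℕ} (A : Matrix (Fin m) (Fin n) ℚ) (b : Fin m → ℝ) : Set (Fin n → ℝ) :=
  {x | ∀ i, (∑ j, (A i j : ℝ) * x j) ≤ b i}

/-- If the recession polyhedron `P_0 = {x : A x ≤ 0}` has infinite
lattice width, then for every right-hand side `b` with `P_b` nonempty, `P_b` contains
an integral point. -/
theorem infinite_width_implies_integral_point {m n : ℕ} (ω : ℝ)
    (hω : IsFlatnessConstant n ω) (A : Matrix (Fin m) (Fin n) ℚ)
    (hinf : ∀ c : Fin n → ℤ, c ≠ 0 → widthAlong (Pb A 0) (fun i => (c i : ℝ)) = ⊤) :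
    ∀ b : Fin m → ℝ, (Pb A b).Nonempty →
      ∃ z : Fin n → ℤ, (fun i => (z i : ℝ)) ∈ Pb A b := by
  classical
  intro b hb
  obtain ⟨x₀, hx₀⟩ := hb
  have h0C : (0 : Fin n → ℝ) ∈ Pb A (0 : Fin m → ℝ) := by
    intro i; simp
  -- Step 1: every row of A is either zero, or can be made strictly negative on P_0.
  have key : ∀ i : Fin m, (∀ j, A i j = 0) ∨
      ∃ x ∈ Pb A (0 : Fin m → ℝ), (∑ j, (A i j : ℝ) * x j) < 0 := by
    intro i
    by_contra hcon
    push_neg at hcon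
    obtain ⟨⟨j₀, hj₀⟩, hzero⟩ := hcon
    -- every x in P_0 has row i value exactly 0
    have hrow0 : ∀ x ∈ Pb A (0 : Fin m → ℝ), (∑ j, (A i j : ℝ) * x j) = 0 := by
      intro x hx
      have h1 : (∑ j, (A i j : ℝ) * x j) ≤ 0 := by simpa using hx i
      exact le_antisymm h1 (hzero x hx)
    -- build an integer multiple of row i
    set d : ℤ := ∏ k : Fin n, ((A i k).den : ℤ) with hd
    have hdpos : 0 < d := Finset.prod_pos (fun k _ => by exact_mod_cast (A i k).pos)
    set c : Fin n → ℤ := fun j => (A i j).num * (d / ((A i j).den : ℤ)) with hc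
    have hdvd : ∀ j, ((A i j).den : ℤ) ∣ d := fun j =>
      Finset.dvd_prod_of_mem _ (Finset.mem_univ j)
    have hquot : ∀ j, 0 < d / ((A i j).den : ℤ) := by
      intro j
      apply Int.ediv_pos_of_pos_of_dvd hdpos (by positivity) (hdvd j)
    have hcast : ∀ j, ((c j : ℚ)) = A i j * (d : ℚ) := by
      intro j
      obtain ⟨e, he⟩ := hdvd j
      have hden0 : ((A i j).den : ℤ) ≠ 0 := by
        have := (A i j).pos; positivity
      have hq : d / ((A i j).den : ℤ) = e := by
        rw [he, Int.mul_ediv_cancel_left _ hden0]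
      have hnum : ((A i j).num : ℚ) = A i j * ((A i j).den : ℚ) :=
        (Rat.mul_den_eq_num (A i j)).symm
      rw [hc]
      simp only [hq]
      push_cast [he]
      rw [hnum]; ring
    have hc0 : c ≠ 0 := by
      intro h
      have h1 : c j₀ = 0 := congrFun h j₀
      rw [hc] at h1
      rcases mul_eq_zero.1 h1 with h2 | h2
      · exact hj₀ (Rat.num_eq_zero.1 h2)
      · exact absurd h2 (ne_of_gt (hquot j₀))
    have hW := hinf c hc0
    have himg : (fun x => ((∑ j, ((c j : ℝ)) * x j : ℝ) : EReal)) '' Pb A (0 : Fin m → ℝ)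
        = {(0 : EReal)} := by
      apply Subset.antisymm
      · rintro w ⟨x, hx, rfl⟩
        have hcr : ∀ j, ((c j : ℝ)) = (A i j : ℝ) * (d : ℝ) := by
          intro j
          have := hcast j
          exact_mod_cast congrArg (fun q : ℚ => (q : ℝ)) this
        have hsum : (∑ j, ((c j : ℝ)) * x j) = (d : ℝ) * ∑ j, (A i j : ℝ) * x j := by
          rw [Finset.mul_sum]
          refine Finset.sum_congr rfl fun j _ => ?_
          rw [hcr j]; ring
        have : (∑ j, ((c j : ℝ)) * x j) = 0 := by rw [hsum, hrow0 x hx, mul_zero]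
        simp [this]
      · rintro w hw
        simp only [Set.mem_singleton_iff] at hw
        subst hw
        refine ⟨0, h0C, ?_⟩
        simp
    rw [widthAlong, himg] at hW
    simp at hW
  -- Step 2: a vector xs in P_0 making all nonzero rows strictly negative
  have hex : ∀ i : Fin m, ∃ y, y ∈ Pb A (0 : Fin m → ℝ) ∧
      ((¬ ∀ j, A i j = 0) → (∑ j, (A i j : ℝ) * y j) < 0) := by
    intro i
    rcases key i with h | ⟨x, hx, hlt⟩
    · exact ⟨0, h0C, fun hn => absurd h hn⟩
    · exact ⟨x, hx, fun _ => hlt⟩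
  choose g hgC hglt using hex
  set xs : Fin n → ℝ := fun j => ∑ k : Fin m, g k j with hxs
  have hrow : ∀ i : Fin m, (∑ j, (A i j : ℝ) * xs j)
      = ∑ k : Fin m, (∑ j, (A i j : ℝ) * g k j) := by
    intro i
    rw [Finset.sum_comm]
    refine Finset.sum_congr rfl fun j _ => ?_
    rw [hxs, Finset.mul_sum]
  have hrow_le : ∀ i k, (∑ j, (A i j : ℝ) * g k j) ≤ 0 := by
    intro i k
    simpa using hgC k i
  have hxsrow : ∀ i, (¬ ∀ j, A i j = 0) → (∑ j, (A i j : ℝ) * xs j) < 0 := by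
    intro i hi
    rw [hrow i]
    have h1 : ∑ k : Fin m, (∑ j, (A i j : ℝ) * g k j)
        ≤ ∑ k : Fin m, (if k = i then (∑ j, (A i j : ℝ) * g i j) else 0) := by
      apply Finset.sum_le_sum
      intro k _
      by_cases hk : k = i
      · subst hk; simp
      · simp only [hk, if_false]; exact hrow_le i k
    have h2 : ∑ k : Fin m, (if k = i then (∑ j, (A i j : ℝ) * g i j) else 0)
        = ∑ j, (A i j : ℝ) * g i j := by
      simp
    calc ∑ k : Fin m, (∑ j, (A i j : ℝ) * g k j) ≤ _ := h1
      _ = ∑ j, (A i j : ℝ) * g i j := h2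
      _ < 0 := hglt i hi
  -- Step 3: choose a scaling factor
  set t : ℝ := ∑ i : Fin m, (if (∀ j, A i j = 0) then 0 else
      ((∑ j, |(A i j : ℝ)|) / 2) / (-(∑ j, (A i j : ℝ) * xs j))) with ht
  have hterm_nonneg : ∀ i : Fin m, 0 ≤ (if (∀ j, A i j = 0) then 0 else
      ((∑ j, |(A i j : ℝ)|) / 2) / (-(∑ j, (A i j : ℝ) * xs j))) := by
    intro i
    by_cases hi : ∀ j, A i j = 0
    · simp [hi]
    · simp only [hi, if_false]
      apply div_nonneg
      · positivity
      · linarith [hxsrow i hi]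
  have htterm : ∀ i, (¬ ∀ j, A i j = 0) →
      ((∑ j, |(A i j : ℝ)|) / 2) / (-(∑ j, (A i j : ℝ) * xs j)) ≤ t := by
    intro i hi
    rw [ht]
    have := Finset.single_le_sum (f := fun i : Fin m => (if (∀ j, A i j = 0) then 0 else
      ((∑ j, |(A i j : ℝ)|) / 2) / (-(∑ j, (A i j : ℝ) * xs j))))
      (fun k _ => hterm_nonneg k) (Finset.mem_univ i)
    simpa [hi] using this
  -- Final: round the point x₀ + t • xs
  refine ⟨fun j => round (x₀ j + t * xs j), ?_⟩
  intro i
  by_cases hi : ∀ j, A i j = 0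
  · have h1 := hx₀ i
    simp only [hi] at h1 ⊢
    simpa using h1
  · have hneg : (∑ j, (A i j : ℝ) * xs j) < 0 := hxsrow i hi
    set y : Fin n → ℝ := fun j => x₀ j + t * xs j with hy
    have hsplit : ∑ j, (A i j : ℝ) * ((round (y j) : ℝ))
        = (∑ j, (A i j : ℝ) * x₀ j) + t * (∑ j, (A i j : ℝ) * xs j)
          + ∑ j, (A i j : ℝ) * ((round (y j) : ℝ) - y j) := by
      rw [Finset.mul_sum, ← Finset.sum_add_distrib, ← Finset.sum_add_distrib]
      refine Finset.sum_congr rfl fun j _ => ?_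
      rw [hy]; ring
    have herr : ∑ j, (A i j : ℝ) * ((round (y j) : ℝ) - y j) ≤ (∑ j, |(A i j : ℝ)|) / 2 := by
      have h1 : ∀ j : Fin n, (A i j : ℝ) * ((round (y j) : ℝ) - y j) ≤ |(A i j : ℝ)| * (1/2) := by
        intro j
        calc (A i j : ℝ) * ((round (y j) : ℝ) - y j)
            ≤ |(A i j : ℝ) * ((round (y j) : ℝ) - y j)| := le_abs_self _
          _ = |(A i j : ℝ)| * |(round (y j) : ℝ) - y j| := abs_mul _ _
          _ ≤ |(A i j : ℝ)| * (1/2) := by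
              apply mul_le_mul_of_nonneg_left _ (abs_nonneg _)
              rw [abs_sub_comm]
              exact abs_sub_round (y j)
      calc ∑ j, (A i j : ℝ) * ((round (y j) : ℝ) - y j)
          ≤ ∑ j, |(A i j : ℝ)| * (1/2) := Finset.sum_le_sum fun j _ => h1 j
        _ = (∑ j, |(A i j : ℝ)|) / 2 := by rw [← Finset.sum_mul]; ring
    have ht1 : t * (∑ j, (A i j : ℝ) * xs j) ≤ -((∑ j, |(A i j : ℝ)|) / 2) := by
      have h2 := htterm i hi
      rw [div_le_iff₀ (by linarith : (0:ℝ) < -(∑ j, (A i j : ℝ) * xs j))] at h2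
      nlinarith
    have hx₀i := hx₀ i
    calc ∑ j, (A i j : ℝ) * ((round (y j) : ℝ))
        = (∑ j, (A i j : ℝ) * x₀ j) + t * (∑ j, (A i j : ℝ) * xs j)
          + ∑ j, (A i j : ℝ) * ((round (y j) : ℝ) - y j) := hsplit
      _ ≤ b i := by linarith
end

section
/- Let A ∈ ℚ^{m×n} have full column rank, let N₁ and N₂ be bases of A, and let C₁ := {y A_{N₁} : y ≥ 0} and C₂ := {−y A_{N₂} : y ≥ 0} be the cones generated by the rows of A_{N₁} and of −A_{N₂}. Let b ∈ ℝ^m be such that P_b := {x : A x ≤ b} is nonempty, and let c ∈ C₁ ∩ C₂ be a row vector. Then c·x ≤ c F_{N₁} b and c·x ≥ c F_{N₂} b for all x ∈ P_b; moreover, if the basic solution F_{N₁} b lies in P_b then max{c·x : x ∈ P_b} = c F_{N₁} b, and if F_{N₂} b lies in P_b then min{c·x : x ∈ P_b} = c F_{N₂} b. -/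
open Matrix Set

/-- `N` is a basis of `A`: a choice of `n` distinct row indices such that the
corresponding `n × n` submatrix `A_N` is nonsingular. -/
def IsBasisOf {m n : ℕ} (A : Matrix (Fin m) (Fin n) ℚ) (N : Fin n → Fin m) : Prop :=
  Function.Injective N ∧ IsUnit (A.submatrix N id).det

/-- The basic solution `F_N b = A_N⁻¹ b_N` associated with a basis `N`. -/
noncomputable def FN {m n : ℕ} (A : Matrix (Fin m) (Fin n) ℚ) (N : Fin n → Fin m)
    (b : Fin m → ℝ) : Fin n → ℝ :=
  (((A.submatrix N id).map ((↑) : ℚ → ℝ))⁻¹).mulVec (fun i => b (N i))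

/-- The cone `{y A_N : y ≥ 0}` generated by the rows of `A_N`. -/
def posCone {m n : ℕ} (A : Matrix (Fin m) (Fin n) ℚ) (N : Fin n → Fin m) :
    Set (Fin n → ℝ) :=
  {c | ∃ y : Fin n → ℝ, (∀ i, 0 ≤ y i) ∧ ∀ j, c j = ∑ i, y i * (A (N i) j : ℝ)}

/-- The cone `{-y A_N : y ≥ 0}` generated by the rows of `-A_N`. -/
def negCone {m n : ℕ} (A : Matrix (Fin m) (Fin n) ℚ) (N : Fin n → Fin m) :
    Set (Fin n → ℝ) :=
  {c | ∃ y : Fin n → ℝ, (∀ i, 0 ≤ y i) ∧ ∀ j, c j = -∑ i, y i * (A (N i) j : ℝ)}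

lemma FN_spec {m n : ℕ} (A : Matrix (Fin m) (Fin n) ℚ) (N : Fin n → Fin m)
    (hN : IsBasisOf A N) (b : Fin m → ℝ) (i : Fin n) :
    ∑ j, (A (N i) j : ℝ) * FN A N b j = b (N i) := by
  set M := (A.submatrix N id).map ((↑) : ℚ → ℝ) with hM
  have hdet : IsUnit M.det := by
    have h := RingHom.map_det (Rat.castHom ℝ) (A.submatrix N id)
    have : M.det = ((A.submatrix N id).det : ℝ) := by rw [hM]; exact h.symm
    rw [this]
    exact hN.2.map (Rat.castHom ℝ)
  have h1 : M * M⁻¹ = 1 := Matrix.mul_nonsing_inv _ hdet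
  have h2 : M.mulVec (FN A N b) = fun i => b (N i) := by
    unfold FN
    rw [← hM, Matrix.mulVec_mulVec, h1, Matrix.one_mulVec]
  have := congrFun h2 i
  simpa [Matrix.mulVec, dotProduct, hM] using this

lemma cone_key {m n : ℕ} (A : Matrix (Fin m) (Fin n) ℚ) (N : Fin n → Fin m)
    (hN : IsBasisOf A N) (b : Fin m → ℝ) (c y : Fin n → ℝ)
    (hy : ∀ i, 0 ≤ y i) (hcy : ∀ j, c j = ∑ i, y i * (A (N i) j : ℝ)) :
    (∀ x ∈ Pb A b, ∑ i, c i * x i ≤ ∑ i, c i * FN A N b i) := by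
  have swap : ∀ x : Fin n → ℝ, ∑ j, c j * x j = ∑ i, y i * ∑ j, (A (N i) j : ℝ) * x j := by
    intro x
    simp only [hcy, Finset.sum_mul, Finset.mul_sum]
    rw [Finset.sum_comm]
    congr 1; ext j; congr 1; ext i; ring
  intro x hx
  rw [swap, swap]
  apply Finset.sum_le_sum
  intro i _
  rw [FN_spec A N hN b i]
  exact mul_le_mul_of_nonneg_left (hx (N i)) (hy i)

/-- For bases `N₁, N₂` of a full-column-rank matrix `A` and a direction
`c ∈ C₁ ∩ C₂`, the basic solutions `F_{N₁} b` and `F_{N₂} b` bound `c·x` on `P_b`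
from above and below; when the basic solutions are feasible, they attain the
maximum resp. minimum of `c·x` over `P_b`. -/
theorem basic_solutions_bound {m n : ℕ} (A : Matrix (Fin m) (Fin n) ℚ)
    (hrank : A.rank = n)
    (N₁ N₂ : Fin n → Fin m) (hN₁ : IsBasisOf A N₁) (hN₂ : IsBasisOf A N₂)
    (b : Fin m → ℝ) (hne : (Pb A b).Nonempty)
    (c : Fin n → ℝ) (hc₁ : c ∈ posCone A N₁) (hc₂ : c ∈ negCone A N₂) :
    (∀ x ∈ Pb A b, ∑ i, c i * x i ≤ ∑ i, c i * FN A N₁ b i) ∧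
    (∀ x ∈ Pb A b, ∑ i, c i * FN A N₂ b i ≤ ∑ i, c i * x i) ∧
    (FN A N₁ b ∈ Pb A b →
      IsGreatest {r : ℝ | ∃ x ∈ Pb A b, r = ∑ i, c i * x i}
        (∑ i, c i * FN A N₁ b i)) ∧
    (FN A N₂ b ∈ Pb A b →
      IsLeast {r : ℝ | ∃ x ∈ Pb A b, r = ∑ i, c i * x i}
        (∑ i, c i * FN A N₂ b i)) := by
  obtain ⟨y₁, hy₁, hcy₁⟩ := hc₁
  obtain ⟨y₂, hy₂, hcy₂⟩ := hc₂
  have hub := cone_key A N₁ hN₁ b c y₁ hy₁ hcy₁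
  have hlb : ∀ x ∈ Pb A b, ∑ i, c i * FN A N₂ b i ≤ ∑ i, c i * x i := by
    have := cone_key A N₂ hN₂ b (fun j => -c j) y₂ hy₂ (by
      intro j; show -c j = _; rw [hcy₂ j]; ring)
    intro x hx
    have h := this x hx
    simp only [neg_mul, Finset.sum_neg_distrib] at h
    linarith
  refine ⟨hub, hlb, ?_, ?_⟩
  · intro hfeas
    exact ⟨⟨FN A N₁ b, hfeas, rfl⟩, by rintro r ⟨x, hx, rfl⟩; exact hub x hx⟩
  · intro hfeas
    exact ⟨⟨FN A N₂ b, hfeas, rfl⟩, by rintro r ⟨x, hx, rfl⟩; exact hlb x hx⟩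
end
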